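/- arXiv:2104.01314 — 4 statements merged into one kernel-verified Lean document; each statement's English description precedes it below -/
import Mathlib

section
/- Let (x⋆, y⋆) be a saddle point of L, i.e. L(x⋆, y) ≤ L(x⋆, y⋆) ≤ L(x, y⋆) for all x ∈ dom f and y ∈ dom g*. Then for any β > 0, x̄ ∈ dom f, ẏ, ỹ ∈ dom g*, and any x̃ with −Kᵀỹ ∈ ∂f(x̃) having Fenchel equality f*(−Kᵀỹ) = ⟨−Kᵀỹ, x̃⟩ − f(x̃) (i.e. x̃ ∈ ∂f*(−Kᵀỹ)), one has D(ỹ) − D(y⋆) ≤ F_β(x̄, ẏ) − L(x̃, ỹ) + (β/2)‖y⋆ − ẏ‖². -/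
/-!
Fenchel's equality turns `D(ỹ)` into `-L(x̃, ỹ)`, while the Fenchel–Young inequality at `x⋆`
gives `D(y⋆) ≥ -L(x⋆, y⋆)`. The saddle property bounds `L(x⋆, y⋆) ≤ L(x̄, y⋆)`, and testing the
maximum defining `g_β(Kx̄, ẏ)` at `y⋆` bounds `L(x̄, y⋆)` by `F_β(x̄, ẏ) + (β/2)‖y⋆ - ẏ‖²`.
-/

open RealInnerProductSpace Set

section

variable {E F : Type*} [NormedAddCommGroup E] [InnerProductSpace ℝ E] [CompleteSpace E]
  [NormedAddCommGroup F] [InnerProductSpace ℝ F] [CompleteSpace F]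

lemma inner_neg_adjoint_apply_left (K : E →L[ℝ] F) (y : F) (x : E) :
    ⟪-(ContinuousLinearMap.adjoint K y), x⟫ = -⟪K x, y⟫ := by
  rw [inner_neg_left, ContinuousLinearMap.adjoint_inner_left, real_inner_comm]

lemma neg_lagrangian_le_conj_neg_adjoint {f fstar : E → ℝ} {S : Set E} (K : E →L[ℝ] F) {y : F}
    (hfstar : IsLUB {r : ℝ | ∃ x ∈ S, r = ⟪-(ContinuousLinearMap.adjoint K y), x⟫ - f x}
      (fstar (-(ContinuousLinearMap.adjoint K y))))
    {x : E} (hx : x ∈ S) :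
    -⟪K x, y⟫ - f x ≤ fstar (-(ContinuousLinearMap.adjoint K y)) := by
  simpa only [inner_neg_adjoint_apply_left] using hfstar.1 ⟨x, hx, rfl⟩

end

lemma inner_sub_le_smoothing_add {F : Type*} [NormedAddCommGroup F] [InnerProductSpace ℝ F]
    {gstar : F → ℝ} {S : Set F} {u ydot : F} {β gβ : ℝ}
    (hgβ : IsGreatest {r : ℝ | ∃ z ∈ S, r = ⟪u, z⟫ - gstar z - β / 2 * ‖z - ydot‖ ^ 2} gβ)
    {y : F} (hy : y ∈ S) :
    ⟪u, y⟫ - gstar y ≤ gβ + β / 2 * ‖y - ydot‖ ^ 2 := by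
  linarith [hgβ.2 ⟨y, hy, rfl⟩]

theorem stmt1_general {p n : ℕ}
    (f : EuclideanSpace ℝ (Fin p) → ℝ) (Sf : Set (EuclideanSpace ℝ (Fin p)))
    (gstar : EuclideanSpace ℝ (Fin n) → ℝ) (Sg : Set (EuclideanSpace ℝ (Fin n)))
    (K : EuclideanSpace ℝ (Fin p) →L[ℝ] EuclideanSpace ℝ (Fin n))
    -- the Fenchel conjugate `f*` of `f`, defined on `Sfstar ⊆ dom f*`
    (fstar : EuclideanSpace ℝ (Fin p) → ℝ) (Sfstar : Set (EuclideanSpace ℝ (Fin p)))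
    (hfstar : ∀ w ∈ Sfstar, IsLUB {r : ℝ | ∃ x ∈ Sf, r = ⟪w, x⟫ - f x} (fstar w))
    -- a saddle point `(x⋆, y⋆)` of the Lagrangian
    (xs : EuclideanSpace ℝ (Fin p)) (ys : EuclideanSpace ℝ (Fin n))
    (hxs : xs ∈ Sf) (hys : ys ∈ Sg)
    (hsaddle : ∀ x ∈ Sf, ∀ y ∈ Sg,
      f xs + ⟪K xs, y⟫ - gstar y ≤ f xs + ⟪K xs, ys⟫ - gstar ys ∧
      f xs + ⟪K xs, ys⟫ - gstar ys ≤ f x + ⟪K x, ys⟫ - gstar ys)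
    (β : ℝ)
    (ydot : EuclideanSpace ℝ (Fin n))
    (xbar : EuclideanSpace ℝ (Fin p)) (hxbar : xbar ∈ Sf)
    (ytil : EuclideanSpace ℝ (Fin n))
    (xtil : EuclideanSpace ℝ (Fin p))
    (hmems : -((ContinuousLinearMap.adjoint K) ys) ∈ Sfstar)
    -- Fenchel's equality, i.e. `x̃ ∈ ∂f*(-Kᵀỹ)`
    (hFenchel : fstar (-((ContinuousLinearMap.adjoint K) ytil)) =
      ⟪-((ContinuousLinearMap.adjoint K) ytil), xtil⟫ - f xtil)
    -- the value `g_β(Kx̄, ẏ)` of the smoothed function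
    (gβ : ℝ)
    (hgβ : IsGreatest
      {r : ℝ | ∃ z ∈ Sg, r = ⟪K xbar, z⟫ - gstar z - β / 2 * ‖z - ydot‖ ^ 2} gβ) :
    (fstar (-((ContinuousLinearMap.adjoint K) ytil)) + gstar ytil) -
      (fstar (-((ContinuousLinearMap.adjoint K) ys)) + gstar ys) ≤
      (f xbar + gβ) - (f xtil + ⟪K xtil, ytil⟫ - gstar ytil) +
        β / 2 * ‖ys - ydot‖ ^ 2 := by
  have hDtil : fstar (-(ContinuousLinearMap.adjoint K ytil)) = -⟪K xtil, ytil⟫ - f xtil := by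
    rw [hFenchel, inner_neg_adjoint_apply_left]
  have hDs := neg_lagrangian_le_conj_neg_adjoint K (hfstar _ hmems) hxs
  have hsaddle_xbar := (hsaddle xbar hxbar ys hys).2
  have hsmooth := inner_sub_le_smoothing_add hgβ hys
  linarith

/-- If `(x⋆, y⋆)` is a saddle point of the Lagrangian
`L(x, y) = f(x) + ⟪Kx, y⟫ - g*(y)`, then for any `β > 0`, `x̄ ∈ dom f`,
`ẏ, ỹ ∈ dom g*`, and any `x̃ ∈ ∂f*(-Kᵀỹ)` (expressed via Fenchel's equality
`f*(-Kᵀỹ) = ⟪-Kᵀỹ, x̃⟫ - f(x̃)`), the dual objective `D(y) = f*(-Kᵀy) + g*(y)`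
satisfies `D(ỹ) - D(y⋆) ≤ F_β(x̄, ẏ) - L(x̃, ỹ) + (β/2)‖y⋆ - ẏ‖²`. -/
theorem stmt1 {p n : ℕ}
    (f : EuclideanSpace ℝ (Fin p) → ℝ) (Sf : Set (EuclideanSpace ℝ (Fin p)))
    (gstar : EuclideanSpace ℝ (Fin n) → ℝ) (Sg : Set (EuclideanSpace ℝ (Fin n)))
    (K : EuclideanSpace ℝ (Fin p) →L[ℝ] EuclideanSpace ℝ (Fin n))
    (hSf : Convex ℝ Sf) (hSg : Convex ℝ Sg)
    (hSfc : IsClosed Sf) (hSgc : IsClosed Sg)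
    (hf : ConvexOn ℝ Sf f) (hgstar : ConvexOn ℝ Sg gstar)
    -- the Fenchel conjugate `f*` of `f`, defined on `Sfstar ⊆ dom f*`
    (fstar : EuclideanSpace ℝ (Fin p) → ℝ) (Sfstar : Set (EuclideanSpace ℝ (Fin p)))
    (hfstar : ∀ w ∈ Sfstar, IsLUB {r : ℝ | ∃ x ∈ Sf, r = ⟪w, x⟫ - f x} (fstar w))
    -- a saddle point `(x⋆, y⋆)` of the Lagrangian
    (xs : EuclideanSpace ℝ (Fin p)) (ys : EuclideanSpace ℝ (Fin n))
    (hxs : xs ∈ Sf) (hys : ys ∈ Sg)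
    (hsaddle : ∀ x ∈ Sf, ∀ y ∈ Sg,
      f xs + ⟪K xs, y⟫ - gstar y ≤ f xs + ⟪K xs, ys⟫ - gstar ys ∧
      f xs + ⟪K xs, ys⟫ - gstar ys ≤ f x + ⟪K x, ys⟫ - gstar ys)
    (β : ℝ) (hβ : 0 < β)
    (ydot : EuclideanSpace ℝ (Fin n))
    (xbar : EuclideanSpace ℝ (Fin p)) (hxbar : xbar ∈ Sf)
    (ytil : EuclideanSpace ℝ (Fin n)) (hytil : ytil ∈ Sg)
    (xtil : EuclideanSpace ℝ (Fin p)) (hxtil : xtil ∈ Sf)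
    (hmemtil : -((ContinuousLinearMap.adjoint K) ytil) ∈ Sfstar)
    (hmems : -((ContinuousLinearMap.adjoint K) ys) ∈ Sfstar)
    -- Fenchel's equality, i.e. `x̃ ∈ ∂f*(-Kᵀỹ)`
    (hFenchel : fstar (-((ContinuousLinearMap.adjoint K) ytil)) =
      ⟪-((ContinuousLinearMap.adjoint K) ytil), xtil⟫ - f xtil)
    -- the value `g_β(Kx̄, ẏ)` of the smoothed function
    (gβ : ℝ)
    (hgβ : IsGreatest
      {r : ℝ | ∃ z ∈ Sg, r = ⟪K xbar, z⟫ - gstar z - β / 2 * ‖z - ydot‖ ^ 2} gβ) :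
    (fstar (-((ContinuousLinearMap.adjoint K) ytil)) + gstar ytil) -
      (fstar (-((ContinuousLinearMap.adjoint K) ys)) + gstar ys) ≤
      (f xbar + gβ) - (f xtil + ⟪K xtil, ytil⟫ - gstar ytil) +
        β / 2 * ‖ys - ydot‖ ^ 2 :=
  stmt1_general f Sf gstar Sg K fstar Sfstar hfstar xs ys hxs hys hsaddle β ydot xbar hxbar ytil
    xtil hmems hFenchel gβ hgβ
end

section
/- Let f be μ_f-strongly convex (μ_f ≥ 0) and g* be μ_{g*}-strongly convex (μ_{g*} ≥ 0), and let (x^k, x̂^k, y^k, ỹ^k) be produced by the ASGARD+ iteration with parameters updated by β_k := β_{k−1}/(1+τ_k), L_k := ‖K‖²/(β_k + μ_{g*}), m_{k+1} := (L_{k+1}+μ_f)/(L_k+μ_f), η_{k+1} := (1−τ_k)τ_k/(τ_k² + m_{k+1}τ_{k+1}), where τ_k, τ_{k+1} ∈ (0,1] satisfy the two conditions: (L_{k−1}+μ_f)(1−τ_k)τ_{k−1}² + μ_f(1−τ_k)τ_k ≥ L_k τ_k² and (L_{k−1}+μ_f)(L_k+μ_f)τ_k τ_{k−1}² + (L_k+μ_f)²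 τ_k² ≥ (L_{k−1}+μ_f) L_k τ_{k−1}². Define the Lyapunov function V_k(x) := F_{β_{k−1}}(x^k, ẏ) − L(x, ỹ^k) + ((L_{k−1}+μ_f)τ_{k−1}²/2)‖(1/τ_{k−1})[x^k − (1−τ_{k−1})x^{k−1}] − x‖². Then for every x ∈ dom f, V_{k+1}(x) ≤ (1 − τ_k) V_k(x). -/
/-!
The primal update `x^{k+1}` minimises an `(L_k + μ_f)`-strongly convex function, so comparing it
with the point `(1 - τ_k) x^k + τ_k x` gives a three-point inequality. The dual update `y^{k+1}`
maximises a `(β_k + μ_{g*})`-strongly concave function; with Young's inequality this bounds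
`g_{β_k}(K x^{k+1}, ẏ)` by the objective at `y^{k+1}` plus `L_k/2 ‖x^{k+1} - x̂^k‖²`. Convexity of
`f` and `g*` along the averaging steps, and `(1 - τ_k) β_{k-1} ≤ β_k`, turn the remaining terms
into `(1 - τ_k) V_k(x)`. What is left is the momentum error `L_k ‖(1 - τ_k) x^k + τ_k x - x̂^k‖²`, a
quadratic form in `x^k - x^{k-1}` and the Lyapunov vector of `V_k`; once the denominator of
`η_k` is cleared, its domination is exactly the two parameter conditions.
-/

open RealInnerProductSpace Set Filter Topology

section StrongConvexity

variable {E : Type*} [NormedAddCommGroup E] [InnerProductSpace ℝ E] {s : Set E} {m n : ℝ}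
  {φ ψ : E → ℝ}

lemma norm_smul_add_smul_sub_sq (x y v : E) {a b : ℝ} (hab : a + b = 1) :
    ‖a • x + b • y - v‖ ^ 2 = a * ‖x - v‖ ^ 2 + b * ‖y - v‖ ^ 2 - a * b * ‖x - y‖ ^ 2 := by
  obtain rfl : b = 1 - a := by linarith
  simp only [← real_inner_self_eq_norm_sq, inner_sub_left, inner_sub_right, inner_add_left,
    inner_add_right, real_inner_smul_left, real_inner_smul_right, real_inner_comm x y,
    real_inner_comm x v, real_inner_comm y v]
  ring

lemma strongConvexOn_sq_norm_sub (hs : Convex ℝ s) (m : ℝ) (c : E) :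
    StrongConvexOn s m (fun z => m / 2 * ‖z - c‖ ^ 2) :=
  ⟨hs, fun x _ y _ a b _ _ hab => le_of_eq <| by
    simp only [smul_eq_mul, norm_smul_add_smul_sub_sq x y c hab]
    ring⟩

lemma StrongConvexOn.add_inner (hφ : StrongConvexOn s m φ) (v : E) :
    StrongConvexOn s m (fun z => φ z + ⟪v, z⟫) :=
  ⟨hφ.1, fun x hx y hy a b ha hb hab => by
    have h := hφ.2 hx hy ha hb hab
    simp only [smul_eq_mul, inner_add_right, real_inner_smul_right] at h ⊢
    linarith⟩

lemma StrongConvexOn.add (hφ : StrongConvexOn s m φ) (hψ : StrongConvexOn s n ψ) :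
    StrongConvexOn s (m + n) (fun z => φ z + ψ z) :=
  (UniformConvexOn.add hφ hψ).mono fun r => le_of_eq (by simp only [Pi.add_apply]; ring)

lemma StrongConvexOn.add_sq_norm_sub_le_of_isMinOn (hφ : StrongConvexOn s m φ) {w z : E}
    (hw : w ∈ s) (hmin : IsMinOn φ s w) (hz : z ∈ s) :
    φ w + m / 2 * ‖z - w‖ ^ 2 ≤ φ z := by
  -- compare `φ w` with `φ ((1 - t) • w + t • z)`, then let `t → 0⁺`
  have hsegment : ∀ t ∈ Ioo (0 : ℝ) 1,
      φ w + m / 2 * ‖z - w‖ ^ 2 - φ z ≤ t * (m / 2 * ‖z - w‖ ^ 2) := by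
    rintro t ⟨ht0, ht1⟩
    have hconv := hφ.2 hw hz (by linarith : 0 ≤ 1 - t) ht0.le (by ring)
    have hle : φ w ≤ _ := hmin (hφ.1 hw hz (by linarith : 0 ≤ 1 - t) ht0.le (by ring))
    simp only [smul_eq_mul, norm_sub_rev w z] at hconv
    have h : t * (φ w + m / 2 * ‖z - w‖ ^ 2 - φ z - t * (m / 2 * ‖z - w‖ ^ 2)) ≤ 0 := by
      linarith
    linarith [nonpos_of_mul_nonpos_right h ht0]
  have hlim : Tendsto (fun t : ℝ => t * (m / 2 * ‖z - w‖ ^ 2)) (𝓝[>] 0) (𝓝 0) := by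
    simpa using (tendsto_id.mul_const _).mono_left (nhdsWithin_le_nhds (a := (0 : ℝ)))
  have hbound := ge_of_tendsto hlim <| by
    filter_upwards [Ioo_mem_nhdsGT one_pos] with t ht using hsegment t ht
  linarith

end StrongConvexity

section DualSmoothing

variable {F : Type*} [NormedAddCommGroup F] [InnerProductSpace ℝ F] {S : Set F} {g : F → ℝ}
  {μ β : ℝ} {ydot : F}

lemma inner_sub_mul_sq_le (a b : F) {σ : ℝ} (hσ : 0 < σ) :
    ⟪a, b⟫ - σ / 2 * ‖b‖ ^ 2 ≤ ‖a‖ ^ 2 / (2 * σ) := by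
  have hsq : 0 ≤ (‖a‖ - σ * ‖b‖) ^ 2 / (2 * σ) := by positivity
  have hexp : (‖a‖ - σ * ‖b‖) ^ 2 / (2 * σ)
      = ‖a‖ ^ 2 / (2 * σ) - ‖a‖ * ‖b‖ + σ / 2 * ‖b‖ ^ 2 := by
    field_simp
    ring
  linarith [real_inner_le_norm a b]

/-- The smoothed value `g_β(u, ẏ)` is the maximum over `y` of `smoothingObjective g* ẏ β u y`. -/
noncomputable def smoothingObjective (g : F → ℝ) (ydot : F) (β : ℝ) (u y : F) : ℝ :=
  ⟪u, y⟫ - g y - β / 2 * ‖y - ydot‖ ^ 2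

lemma smoothingObjective_le_of_isMaxOn (hg : StrongConvexOn S μ g) (hβμ : 0 < β + μ)
    {u y' : F} (hy' : y' ∈ S) (hmax : IsMaxOn (smoothingObjective g ydot β u) S y')
    {y : F} (hy : y ∈ S) (v : F) :
    smoothingObjective g ydot β v y
      ≤ smoothingObjective g ydot β v y' + ‖v - u‖ ^ 2 / (2 * (β + μ)) := by
  have hmin : IsMinOn (fun y => β / 2 * ‖y - ydot‖ ^ 2 + (g y + ⟪-u, y⟫)) S y' :=
    isMinOn_iff.mpr fun y hy => by
      have h := isMaxOn_iff.mp hmax y hy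
      simp only [smoothingObjective, inner_neg_left] at h ⊢
      linarith
  have hquad := ((strongConvexOn_sq_norm_sub hg.1 β ydot).add
    (hg.add_inner (-u))).add_sq_norm_sub_le_of_isMinOn hy' hmin hy
  have hyoung := inner_sub_mul_sq_le (v - u) (y - y') hβμ
  simp only [smoothingObjective, inner_neg_left, inner_sub_left, inner_sub_right] at hquad hyoung ⊢
  linarith

lemma dual_step (hg : StrongConvexOn S μ g) (hμ : 0 ≤ μ) {β₀ β₁ τ G₀ G₁ : ℝ}
    (hβ₁ : 0 < β₁) (hβ : β₁ = β₀ / (1 + τ)) (hτ : τ ∈ Ioc 0 1) {u₀ u₁ uhat w y' ytil : F}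
    (hG₀ : IsGreatest {r | ∃ z ∈ S, r = smoothingObjective g ydot β₀ u₀ z} G₀)
    (hG₁ : IsGreatest {r | ∃ z ∈ S, r = smoothingObjective g ydot β₁ u₁ z} G₁)
    (hy' : y' ∈ S) (hmax : IsMaxOn (smoothingObjective g ydot β₁ uhat) S y') (hytil : ytil ∈ S) :
    G₁ + g ((1 - τ) • ytil + τ • y') - ⟪w, (1 - τ) • ytil + τ • y'⟫
      ≤ ⟪u₁, y'⟫ + ‖u₁ - uhat‖ ^ 2 / (2 * (β₁ + μ)) - τ * ⟪w, y'⟫ - (1 - τ) * ⟪u₀, y'⟫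
        + (1 - τ) * (G₀ + g ytil - ⟪w, ytil⟫) := by
  obtain ⟨hτ_pos, hτ_le⟩ := hτ
  obtain ⟨y₁, hy₁, rfl⟩ := hG₁.1
  have hnew := smoothingObjective_le_of_isMaxOn hg (by linarith) hy' hmax hy₁ u₁
  have hold : smoothingObjective g ydot β₀ u₀ y' ≤ G₀ := hG₀.2 ⟨y', hy', rfl⟩
  have hconv : g ((1 - τ) • ytil + τ • y') ≤ (1 - τ) * g ytil + τ * g y' :=
    (strongConvexOn_zero.mp (hg.mono hμ)).2 hytil hy' (by linarith) hτ_pos.le (by ring)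
  have hβ_le : (1 - τ) * β₀ ≤ β₁ := by
    have hβ₀ : β₀ = β₁ * (1 + τ) := by rw [hβ]; field_simp
    rw [hβ₀]
    nlinarith [mul_pos hβ₁ (pow_pos hτ_pos 2)]
  have hold' := mul_le_mul_of_nonneg_left hold (by linarith : 0 ≤ 1 - τ)
  have hdist := mul_le_mul_of_nonneg_right hβ_le (sq_nonneg ‖y' - ydot‖)
  simp only [smoothingObjective, inner_add_right, real_inner_smul_right] at hnew hold' ⊢
  linarith

end DualSmoothing

section Primal

variable {E : Type*} [NormedAddCommGroup E] [InnerProductSpace ℝ E]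

lemma inner_quadratic_nonneg {A B C : ℝ} (hA : 0 ≤ A) (hC : 0 ≤ C) (hB : B ^ 2 ≤ A * C)
    (c d : E) : 0 ≤ A * ‖d‖ ^ 2 + 2 * B * ⟪c, d⟫ + C * ‖c‖ ^ 2 := by
  rcases hA.eq_or_lt with rfl | hA
  · obtain rfl : B = 0 := by nlinarith
    simp only [zero_mul, mul_zero, zero_add]
    positivity
  · have hsq : A * (A * ‖d‖ ^ 2 + 2 * B * ⟪c, d⟫ + C * ‖c‖ ^ 2)
        = ‖A • d + B • c‖ ^ 2 + (A * C - B ^ 2) * ‖c‖ ^ 2 := by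
      simp only [← real_inner_self_eq_norm_sq, inner_add_left, inner_add_right,
        real_inner_smul_left, real_inner_smul_right, real_inner_comm c d]
      ring
    have hrhs : 0 ≤ ‖A • d + B • c‖ ^ 2 + (A * C - B ^ 2) * ‖c‖ ^ 2 := by
      have : 0 ≤ A * C - B ^ 2 := by linarith
      positivity
    exact nonneg_of_mul_nonneg_right (hsq ▸ hrhs) hA

/-- The parameter conditions of the paper at index `k`, with `τ₀ = τ_{k-1}`, `τ₁ = τ_k`,
`L₀ = L_{k-1}`, `L₁ = L_k`. -/
def ParamConditions (μf L₀ L₁ τ₀ τ₁ : ℝ) : Prop :=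
  (L₀ + μf) * (1 - τ₁) * τ₀ ^ 2 + μf * (1 - τ₁) * τ₁ ≥ L₁ * τ₁ ^ 2 ∧
    (L₀ + μf) * (L₁ + μf) * τ₁ * τ₀ ^ 2 + (L₁ + μf) ^ 2 * τ₁ ^ 2 ≥ (L₀ + μf) * L₁ * τ₀ ^ 2

variable {μf L₀ L₁ τ₀ τ₁ η : ℝ}

lemma momentum_coeffs (hτ₀ : 0 < τ₀) (hτ₁ : τ₁ ∈ Ioc 0 1) (hμf : 0 ≤ μf) (hL₀ : 0 ≤ L₀)
    (hL₁ : 0 ≤ L₁) (hη : η = (1 - τ₀) * τ₀ / (τ₀ ^ 2 + (L₁ + μf) / (L₀ + μf) * τ₁))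
    (hcond : ParamConditions μf L₀ L₁ τ₀ τ₁)
    {s A B C : ℝ} (hs : s = τ₁ * (1 - τ₀) - η * τ₀)
    (hA : A = (L₀ + μf) * (1 - τ₁) * τ₀ ^ 2 + μf * (1 - τ₁) * τ₁ - L₁ * τ₁ ^ 2)
    (hB : B = L₁ * s * τ₁ - μf * τ₁ * (1 - τ₁) * (1 - τ₀))
    (hC : C = μf * τ₁ * (1 - τ₁) * (1 - τ₀) ^ 2 - L₁ * s ^ 2) :
    0 ≤ A ∧ 0 ≤ C ∧ B ^ 2 ≤ A * C := by
  obtain ⟨hc₁, hc₂⟩ := hcond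
  obtain ⟨hτ₁_pos, hτ₁_le⟩ := hτ₁
  have hA_nonneg : 0 ≤ A := by rw [hA]; linarith
  rcases (by positivity : 0 ≤ L₀ + μf).eq_or_lt with hP | hP
  -- here `η` is a junk value, but all parameters vanish except `τ₀, τ₁`
  · obtain rfl : μf = 0 := by linarith
    obtain rfl : L₀ = 0 := by linarith
    obtain rfl : L₁ = 0 := by nlinarith [pow_pos hτ₁_pos 2]
    subst hB hC
    exact ⟨hA_nonneg, by simp, by simp⟩
  · obtain ⟨D, hD⟩ : ∃ D, D = (L₀ + μf) * τ₀ ^ 2 + (L₁ + μf) * τ₁ := ⟨_, rfl⟩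
    obtain ⟨N, hN⟩ : ∃ N, N = (L₁ + μf) * τ₁ ^ 2 - (L₀ + μf) * τ₀ ^ 2 * (1 - τ₁) := ⟨_, rfl⟩
    obtain ⟨S, hS⟩ : ∃ S, S = (L₀ + μf) * (L₁ + μf) * τ₁ * τ₀ ^ 2 + (L₁ + μf) ^ 2 * τ₁ ^ 2
      - (L₀ + μf) * L₁ * τ₀ ^ 2 := ⟨_, rfl⟩
    obtain ⟨B', hB'⟩ : ∃ B', B' = L₁ * τ₁ * N - μf * τ₁ * (1 - τ₁) * D := ⟨_, rfl⟩
    obtain ⟨C', hC'⟩ : ∃ C', C' = μf * τ₁ * (1 - τ₁) * D ^ 2 - L₁ * N ^ 2 := ⟨_, rfl⟩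
    -- `η` has denominator `D / (L₀ + μf)`; `B'` and `C'` are `B` and `C` with it cleared
    have hD_pos : 0 < D := by rw [hD]; positivity
    have hsD : s * D = (1 - τ₀) * N := by
      rw [hs, hη, hD, hN]
      field_simp
      ring
    have hBD : B * D = (1 - τ₀) * B' := by
      rw [hB, hB']
      linear_combination L₁ * τ₁ * hsD
    have hCD : C * D ^ 2 = (1 - τ₀) ^ 2 * C' := by
      rw [hC, hC']
      linear_combination -L₁ * (s * D + (1 - τ₀) * N) * hsD
    have hC' : C' = A * S + L₁ * μf * τ₁ * (L₀ + μf) * τ₀ ^ 2 := by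
      rw [hC', hA, hS, hD, hN]
      ring
    have hAC' : A * C' - B' ^ 2 = (L₀ + μf) * τ₀ ^ 2 * (1 - τ₁) * (A * S) := by
      rw [hC', hB', hA, hS, hD, hN]
      ring
    have hAS : 0 ≤ A * S := mul_nonneg hA_nonneg (by rw [hS]; linarith)
    have hD_sq : 0 < D ^ 2 := by positivity
    refine ⟨hA_nonneg, nonneg_of_mul_nonneg_left ?_ hD_sq, ?_⟩
    · rw [hCD, hC']
      positivity
    · have key : (A * C - B ^ 2) * D ^ 2 = (1 - τ₀) ^ 2 * (A * C' - B' ^ 2) := by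
        linear_combination A * hCD - (B * D + (1 - τ₀) * B') * hBD
      rw [hAC'] at key
      have : 0 ≤ (A * C - B ^ 2) * D ^ 2 := by
        rw [key]
        have : 0 ≤ 1 - τ₁ := by linarith
        positivity
      linarith [nonneg_of_mul_nonneg_left this hD_sq]

lemma momentum_bound (hτ₀ : 0 < τ₀) (hτ₁ : τ₁ ∈ Ioc 0 1) (hμf : 0 ≤ μf) (hL₀ : 0 ≤ L₀)
    (hL₁ : 0 ≤ L₁) (hη : η = (1 - τ₀) * τ₀ / (τ₀ ^ 2 + (L₁ + μf) / (L₀ + μf) * τ₁))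
    (hcond : ParamConditions μf L₀ L₁ τ₀ τ₁)
    (x₀ x₁ x : E) :
    L₁ * ‖(1 - τ₁) • x₁ + τ₁ • x - (x₁ + η • (x₁ - x₀))‖ ^ 2
      ≤ μf * (τ₁ * (1 - τ₁)) * ‖x₁ - x‖ ^ 2
        + (1 - τ₁) * (L₀ + μf) * τ₀ ^ 2 * ‖(1 / τ₀) • (x₁ - (1 - τ₀) • x₀) - x‖ ^ 2 := by
  have hτ₀_ne : τ₀ ≠ 0 := hτ₀.ne'
  set c := (1 / τ₀) • (x₁ - x₀)
  set d := (1 / τ₀) • (x₁ - (1 - τ₀) • x₀) - x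
  have hstep : (1 - τ₁) • x₁ + τ₁ • x - (x₁ + η • (x₁ - x₀))
      = (τ₁ * (1 - τ₀) - η * τ₀) • c - τ₁ • d := by
    simp only [c, d]
    match_scalars <;> field_simp <;> ring
  have hgap : x₁ - x = d - (1 - τ₀) • c := by
    simp only [c, d]
    match_scalars <;> field_simp <;> ring
  obtain ⟨hA, hC, hB⟩ := momentum_coeffs hτ₀ hτ₁ hμf hL₀ hL₁ hη hcond rfl rfl rfl rfl
  have hq := inner_quadratic_nonneg hA hC hB c d
  rw [hstep, hgap]
  simp only [← real_inner_self_eq_norm_sq, inner_sub_left, inner_sub_right,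
    real_inner_smul_left, real_inner_smul_right, real_inner_comm c d] at hq ⊢
  linarith

lemma primal_step {f : E → ℝ} {S : Set E} (hf : StrongConvexOn S μf f)
    (hτ₀ : 0 < τ₀) (hτ₁ : τ₁ ∈ Ioc 0 1) (hμf : 0 ≤ μf) (hL₀ : 0 ≤ L₀) (hL₁ : 0 ≤ L₁)
    (hη : η = (1 - τ₀) * τ₀ / (τ₀ ^ 2 + (L₁ + μf) / (L₀ + μf) * τ₁))
    (hcond : ParamConditions μf L₀ L₁ τ₀ τ₁)
    {x₀ x₁ x x' xhat v : E} (hx₁ : x₁ ∈ S) (hx : x ∈ S) (hxhat : xhat = x₁ + η • (x₁ - x₀))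
    (hx' : x' ∈ S) (hmin : IsMinOn (fun z => f z + ⟪v, z⟫ + L₁ / 2 * ‖z - xhat‖ ^ 2) S x') :
    f x' + ⟪v, x'⟫ + L₁ / 2 * ‖x' - xhat‖ ^ 2
        + (L₁ + μf) * τ₁ ^ 2 / 2 * ‖(1 / τ₁) • (x' - (1 - τ₁) • x₁) - x‖ ^ 2
      ≤ (1 - τ₁) * (f x₁ + ⟪v, x₁⟫) + τ₁ * (f x + ⟪v, x⟫)
        + (1 - τ₁) * ((L₀ + μf) * τ₀ ^ 2 / 2 * ‖(1 / τ₀) • (x₁ - (1 - τ₀) • x₀) - x‖ ^ 2) := by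
  have hmom := momentum_bound hτ₀ hτ₁ hμf hL₀ hL₁ hη hcond x₀ x₁ x
  obtain ⟨hτ₁_pos, hτ₁_le⟩ := hτ₁
  set z := (1 - τ₁) • x₁ + τ₁ • x
  have hz : z ∈ S := hf.1 hx₁ hx (by linarith) hτ₁_pos.le (by ring)
  have hthree : f x' + ⟪v, x'⟫ + L₁ / 2 * ‖x' - xhat‖ ^ 2 + (μf + L₁) / 2 * ‖z - x'‖ ^ 2
      ≤ f z + ⟪v, z⟫ + L₁ / 2 * ‖z - xhat‖ ^ 2 :=
    ((hf.add_inner v).add (strongConvexOn_sq_norm_sub hf.1 L₁ xhat)).add_sq_norm_sub_le_of_isMinOn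
      hx' hmin hz
  have hfz : f z ≤ (1 - τ₁) * f x₁ + τ₁ * f x - (1 - τ₁) * τ₁ * (μf / 2 * ‖x₁ - x‖ ^ 2) :=
    hf.2 hx₁ hx (by linarith) hτ₁_pos.le (by ring)
  have hinner : ⟪v, z⟫ = (1 - τ₁) * ⟪v, x₁⟫ + τ₁ * ⟪v, x⟫ := by
    rw [inner_add_right, real_inner_smul_right, real_inner_smul_right]
  have hz_sub : z - x' = (-τ₁) • ((1 / τ₁) • (x' - (1 - τ₁) • x₁) - x) := by
    match_scalars <;> field_simp
  have hquad : (L₁ + μf) * τ₁ ^ 2 / 2 * ‖(1 / τ₁) • (x' - (1 - τ₁) • x₁) - x‖ ^ 2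
      = (μf + L₁) / 2 * ‖z - x'‖ ^ 2 := by
    rw [hz_sub, norm_smul, mul_pow, norm_neg, Real.norm_eq_abs, sq_abs]
    ring
  rw [← hxhat] at hmom
  linarith

end Primal

lemma sq_norm_apply_div_le {E F : Type*} [NormedAddCommGroup E] [InnerProductSpace ℝ E]
    [NormedAddCommGroup F] [InnerProductSpace ℝ F] (K : E →L[ℝ] F) (w : E) {c : ℝ} (hc : 0 < c) :
    ‖K w‖ ^ 2 / (2 * c) ≤ ‖K‖ ^ 2 / c / 2 * ‖w‖ ^ 2 :=
  calc ‖K w‖ ^ 2 / (2 * c) ≤ (‖K‖ * ‖w‖) ^ 2 / (2 * c) := by gcongr; exact K.le_opNorm w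
    _ = ‖K‖ ^ 2 / c / 2 * ‖w‖ ^ 2 := by ring

theorem stmt3_general {p n : ℕ}
    (f : EuclideanSpace ℝ (Fin p) → ℝ) (Sf : Set (EuclideanSpace ℝ (Fin p)))
    (gstar : EuclideanSpace ℝ (Fin n) → ℝ) (Sg : Set (EuclideanSpace ℝ (Fin n)))
    (K : EuclideanSpace ℝ (Fin p) →L[ℝ] EuclideanSpace ℝ (Fin n))
    (hSg : Convex ℝ Sg)
    (μf μg : ℝ) (hμf : 0 ≤ μf) (hμg : 0 ≤ μg)
    (hf : ConvexOn ℝ Sf (fun x => f x - μf / 2 * ‖x‖ ^ 2))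
    (hgstar : ConvexOn ℝ Sg (fun y => gstar y - μg / 2 * ‖y‖ ^ 2))
    (ydot : EuclideanSpace ℝ (Fin n))
    -- the smoothed values `g_β(u, ẏ)`
    (gb : ℝ → EuclideanSpace ℝ (Fin n) → ℝ)
    (hgb : ∀ b : ℝ, 0 < b → ∀ u,
      IsGreatest {r : ℝ | ∃ z ∈ Sg, r = ⟪u, z⟫ - gstar z - b / 2 * ‖z - ydot‖ ^ 2} (gb b u))
    -- parameters
    (τ β L η : ℕ → ℝ)
    (hτ : ∀ j, τ j ∈ Ioc (0 : ℝ) 1)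
    (hβ0 : 0 < β 0)
    (hβ : ∀ j, β (j + 1) = β j / (1 + τ (j + 1)))
    (hL : ∀ j, L j = ‖K‖ ^ 2 / (β j + μg))
    (hη : ∀ j, η (j + 1) =
      (1 - τ j) * τ j / ((τ j) ^ 2 + ((L (j + 1) + μf) / (L j + μf)) * τ (j + 1)))
    -- the iterates
    (x xhat : ℕ → EuclideanSpace ℝ (Fin p)) (yseq ytil : ℕ → EuclideanSpace ℝ (Fin n))
    (hytil0 : ytil 0 ∈ Sg)
    (hyup : ∀ j, yseq (j + 1) ∈ Sg ∧
      IsMaxOn (fun z => ⟪K (xhat j), z⟫ - gstar z - β j / 2 * ‖z - ydot‖ ^ 2) Sg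
        (yseq (j + 1)))
    (hxup : ∀ j, x (j + 1) ∈ Sf ∧
      IsMinOn (fun z => f z + ⟪(ContinuousLinearMap.adjoint K) (yseq (j + 1)), z⟫ +
        L j / 2 * ‖z - xhat j‖ ^ 2) Sf (x (j + 1)))
    (hxhat : ∀ j, xhat (j + 1) = x (j + 1) + η (j + 1) • (x (j + 1) - x j))
    (hytil : ∀ j, ytil (j + 1) = (1 - τ j) • ytil j + τ j • yseq (j + 1))
    -- the index `k ≥ 1` and the two conditions (eq:param_cond)
    (k : ℕ) (hk : 1 ≤ k)
    (hcond1 : (L (k - 1) + μf) * (1 - τ k) * (τ (k - 1)) ^ 2 + μf * (1 - τ k) * τ k ≥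
      L k * (τ k) ^ 2)
    (hcond2 : (L (k - 1) + μf) * (L k + μf) * τ k * (τ (k - 1)) ^ 2 +
      (L k + μf) ^ 2 * (τ k) ^ 2 ≥ (L (k - 1) + μf) * L k * (τ (k - 1)) ^ 2) :
    ∀ xx ∈ Sf,
      f (x (k + 1)) + gb (β k) (K (x (k + 1)))
        - (f xx + ⟪K xx, ytil (k + 1)⟫ - gstar (ytil (k + 1)))
        + (L k + μf) * (τ k) ^ 2 / 2 *
          ‖(1 / τ k) • (x (k + 1) - (1 - τ k) • x k) - xx‖ ^ 2
      ≤ (1 - τ k) *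
        (f (x k) + gb (β (k - 1)) (K (x k))
          - (f xx + ⟪K xx, ytil k⟫ - gstar (ytil k))
          + (L (k - 1) + μf) * (τ (k - 1)) ^ 2 / 2 *
            ‖(1 / τ (k - 1)) • (x k - (1 - τ (k - 1)) • x (k - 1)) - xx‖ ^ 2) := by
  intro xx hxx
  obtain ⟨j, rfl⟩ : ∃ j, k = j + 1 := ⟨k - 1, by omega⟩
  simp only [Nat.add_sub_cancel] at hcond1 hcond2 ⊢
  have hβ_pos : ∀ i, 0 < β i := by
    intro i
    induction i with
    | zero => exact hβ0
    | succ i ih => rw [hβ]; have := (hτ (i + 1)).1; positivity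
  have hL_nonneg : ∀ i, 0 ≤ L i := fun i => by rw [hL]; have := hβ_pos i; positivity
  have hytil_mem : ∀ i, ytil i ∈ Sg := by
    intro i
    induction i with
    | zero => exact hytil0
    | succ i ih =>
      rw [hytil]
      exact hSg ih (hyup i).1 (by linarith [(hτ i).2]) (hτ i).1.le (by ring)
  have hdual := dual_step (w := K xx) (strongConvexOn_iff_convex.mpr hgstar) hμg
    (hβ_pos (j + 1)) (hβ j) (hτ (j + 1)) (hgb _ (hβ_pos j) (K (x (j + 1))))
    (hgb _ (hβ_pos (j + 1)) (K (x (j + 1 + 1)))) (hyup (j + 1)).1 (hyup (j + 1)).2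
    (hytil_mem (j + 1))
  have hprimal := primal_step (strongConvexOn_iff_convex.mpr hf) (hτ j).1 (hτ (j + 1)) hμf
    (hL_nonneg j) (hL_nonneg (j + 1)) (hη j) ⟨hcond1, hcond2⟩ (hxup j).1 hxx (hxhat j)
    (hxup (j + 1)).1 (hxup (j + 1)).2
  have hK := sq_norm_apply_div_le K (x (j + 1 + 1) - xhat (j + 1))
    (by linarith [hβ_pos (j + 1)] : 0 < β (j + 1) + μg)
  simp only [ContinuousLinearMap.adjoint_inner_left, real_inner_comm _ (yseq (j + 1 + 1))]
    at hprimal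
  rw [map_sub, ← hL] at hK
  rw [hytil (j + 1)]
  linarith

/-- Lemma 3 of the paper: recursive estimate of the Lyapunov function.
For the ASGARD+ iterates with parameter updates
`β_k = β_{k-1}/(1+τ_k)`, `L_k = ‖K‖²/(β_k + μ_{g*})`,
`η_{k+1} = (1-τ_k)τ_k/(τ_k² + m_{k+1}τ_{k+1})` with `m_{k+1} = (L_{k+1}+μ_f)/(L_k+μ_f)`,
if the two conditions of (eq:param_cond) hold at index `k ≥ 1`, then the Lyapunov
function `V_k(x) = F_{β_{k-1}}(x^k, ẏ) - L(x, ỹ^k)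
  + ((L_{k-1}+μ_f)τ_{k-1}²/2)‖(1/τ_{k-1})[x^k - (1-τ_{k-1})x^{k-1}] - x‖²`
satisfies `V_{k+1}(x) ≤ (1 - τ_k) V_k(x)` for every `x ∈ dom f`. -/
theorem stmt3 {p n : ℕ}
    (f : EuclideanSpace ℝ (Fin p) → ℝ) (Sf : Set (EuclideanSpace ℝ (Fin p)))
    (gstar : EuclideanSpace ℝ (Fin n) → ℝ) (Sg : Set (EuclideanSpace ℝ (Fin n)))
    (K : EuclideanSpace ℝ (Fin p) →L[ℝ] EuclideanSpace ℝ (Fin n))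
    (hSf : Convex ℝ Sf) (hSg : Convex ℝ Sg)
    (hSfc : IsClosed Sf) (hSgc : IsClosed Sg)
    (μf μg : ℝ) (hμf : 0 ≤ μf) (hμg : 0 ≤ μg)
    (hf : ConvexOn ℝ Sf (fun x => f x - μf / 2 * ‖x‖ ^ 2))
    (hgstar : ConvexOn ℝ Sg (fun y => gstar y - μg / 2 * ‖y‖ ^ 2))
    (ydot : EuclideanSpace ℝ (Fin n))
    -- the smoothed values `g_β(u, ẏ)`
    (gb : ℝ → EuclideanSpace ℝ (Fin n) → ℝ)
    (hgb : ∀ b : ℝ, 0 < b → ∀ u,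
      IsGreatest {r : ℝ | ∃ z ∈ Sg, r = ⟪u, z⟫ - gstar z - b / 2 * ‖z - ydot‖ ^ 2} (gb b u))
    -- parameters
    (τ β L η : ℕ → ℝ)
    (hτ : ∀ j, τ j ∈ Ioc (0 : ℝ) 1)
    (hβ0 : 0 < β 0)
    (hβ : ∀ j, β (j + 1) = β j / (1 + τ (j + 1)))
    (hL : ∀ j, L j = ‖K‖ ^ 2 / (β j + μg))
    (hη : ∀ j, η (j + 1) =
      (1 - τ j) * τ j / ((τ j) ^ 2 + ((L (j + 1) + μf) / (L j + μf)) * τ (j + 1)))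
    -- the iterates
    (x xhat : ℕ → EuclideanSpace ℝ (Fin p)) (yseq ytil : ℕ → EuclideanSpace ℝ (Fin n))
    (hx0 : x 0 ∈ Sf) (hxhat0 : xhat 0 = x 0) (hytil0 : ytil 0 ∈ Sg)
    (hyup : ∀ j, yseq (j + 1) ∈ Sg ∧
      IsMaxOn (fun z => ⟪K (xhat j), z⟫ - gstar z - β j / 2 * ‖z - ydot‖ ^ 2) Sg
        (yseq (j + 1)))
    (hxup : ∀ j, x (j + 1) ∈ Sf ∧
      IsMinOn (fun z => f z + ⟪(ContinuousLinearMap.adjoint K) (yseq (j + 1)), z⟫ +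
        L j / 2 * ‖z - xhat j‖ ^ 2) Sf (x (j + 1)))
    (hxhat : ∀ j, xhat (j + 1) = x (j + 1) + η (j + 1) • (x (j + 1) - x j))
    (hytil : ∀ j, ytil (j + 1) = (1 - τ j) • ytil j + τ j • yseq (j + 1))
    -- the index `k ≥ 1` and the two conditions (eq:param_cond)
    (k : ℕ) (hk : 1 ≤ k)
    (hcond1 : (L (k - 1) + μf) * (1 - τ k) * (τ (k - 1)) ^ 2 + μf * (1 - τ k) * τ k ≥
      L k * (τ k) ^ 2)
    (hcond2 : (L (k - 1) + μf) * (L k + μf) * τ k * (τ (k - 1)) ^ 2 +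
      (L k + μf) ^ 2 * (τ k) ^ 2 ≥ (L (k - 1) + μf) * L k * (τ (k - 1)) ^ 2) :
    ∀ xx ∈ Sf,
      f (x (k + 1)) + gb (β k) (K (x (k + 1)))
        - (f xx + ⟪K xx, ytil (k + 1)⟫ - gstar (ytil (k + 1)))
        + (L k + μf) * (τ k) ^ 2 / 2 *
          ‖(1 / τ k) • (x (k + 1) - (1 - τ k) • x k) - xx‖ ^ 2
      ≤ (1 - τ k) *
        (f (x k) + gb (β (k - 1)) (K (x k))
          - (f xx + ⟪K xx, ytil k⟫ - gstar (ytil k))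
          + (L (k - 1) + μf) * (τ (k - 1)) ^ 2 / 2 *
            ‖(1 / τ (k - 1)) • (x k - (1 - τ (k - 1)) • x (k - 1)) - xx‖ ^ 2) :=
  stmt3_general f Sf gstar Sg K hSg μf μg hμf hμg hf hgstar ydot gb hgb τ β L η hτ hβ0 hβ hL hη x
    xhat yseq ytil hytil0 hyup hxup hxhat hytil k hk hcond1 hcond2
end

section
/- Assume f and g* are merely convex (μ_f = μ_{g*} = 0) and a saddle point of L exists. Run ASGARD+ with τ₀ := 1, and for k ≥ 0 let τ_{k+1} be the unique root in (0,1) of τ³ + τ² + τ_k² τ − τ_k² = 0, β_{k+1} := β_k/(1+τ_{k+1}), L_k := ‖K‖²/β_k, m_{k+1} := L_{k+1}/L_k, η_{k+1} := (1−τ_k)τ_k/(τ_k² + m_{k+1}τ_{k+1}). Then for all k ≥ 1, the gap function satisfies G_{X×Y}(x^k, ỹ^k) ≤ (‖K‖²/(2β₀k)) · sup_{x∈X}‖x⁰ − x‖² + (β₀/(k+1)) · sup_{y∈Y}‖y − ẏ‖². -/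
/-!
Both proximal steps obey a three-point inequality (a minimiser `m` of a convex function plus
`L/2 ‖· - w‖²` beats every competitor `v` by `L/2 ‖v - m‖²`), and Young's inequality
`⟪K d, w⟫ ≤ ‖K‖²/(2β) ‖d‖² + β/2 ‖w‖²` lets the primal and dual steps be chained. Fix a
comparison point `x̃`. Testing the primal step against `(1 - τ) x^{k+1} + τ x̃`, with the dual
average `ỹ^{k+2}` formed with the same weight, shows that the energy
`E_k = L(x^{k+1}, y^{k+1}) - β_k/2 ‖y^{k+1} - ẏ‖² + L_k/2 ‖x^{k+1} - x̂^k‖² - L(x̃, ỹ^{k+1})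
  + L_k τ_k²/2 ‖x̃ - z^{k+1}‖²`,
where `x^{k+1} = (1 - τ_k) x^k + τ_k z^{k+1}`, contracts by the factor `1 - τ_{k+1}`: the choice
of `η` says exactly `x̂^{k+1} = (1 - τ_{k+1}) x^{k+1} + τ_{k+1} z^{k+1}`, and the cubic for `τ`
says `L_{k+1} τ_{k+1}² = (1 - τ_{k+1}) L_k τ_k²`. The same cubic gives `τ_k ≥ 1/(k+1)`, whence
`τ_k²/β_k ≤ 1/(β₀(k+1))` and `β_k ≤ 2β₀/(k+2)`. Finally, for a dual comparison point `ȳ`, the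
dual step bounds `L(x^{k+1}, ȳ) - L(x̃, ỹ^{k+1})` by `E_k + β_k/2 ‖ȳ - ẏ‖²`.
-/

open RealInnerProductSpace Set Filter Topology

section ProximalInequalities

variable {E : Type*} [NormedAddCommGroup E] [InnerProductSpace ℝ E]

theorem StrongConvexOn.add_half_mul_norm_sub_sq_le_of_isMinOn {s : Set E} {m : ℝ} {φ : E → ℝ}
    {x y : E} (hφ : StrongConvexOn s m φ) (hx : x ∈ s) (hmin : IsMinOn φ s x) (hy : y ∈ s) :
    φ x + m / 2 * ‖y - x‖ ^ 2 ≤ φ y := by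
  have hstep : ∀ t ∈ Ioc (0 : ℝ) 1, φ x + (1 - t) * (m / 2 * ‖y - x‖ ^ 2) ≤ φ y := by
    rintro t ⟨ht0, ht1⟩
    have hconv := hφ.2 hx hy (sub_nonneg.2 ht1) ht0.le (by ring)
    have hle : φ x ≤ φ ((1 - t) • x + t • y) :=
      hmin (hφ.1 hx hy (sub_nonneg.2 ht1) ht0.le (by ring))
    rw [norm_sub_rev] at hconv
    simp only [smul_eq_mul] at hconv
    nlinarith
  have hlim : Tendsto (fun t : ℝ => φ x + (1 - t) * (m / 2 * ‖y - x‖ ^ 2)) (𝓝[>] 0)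
      (𝓝 (φ x + m / 2 * ‖y - x‖ ^ 2)) := by
    refine tendsto_nhdsWithin_of_tendsto_nhds ?_
    have : Continuous fun t : ℝ => φ x + (1 - t) * (m / 2 * ‖y - x‖ ^ 2) := by fun_prop
    simpa using this.tendsto 0
  exact le_of_tendsto hlim (eventually_of_mem (Ioc_mem_nhdsGT one_pos) hstep)

theorem ConvexOn.strongConvexOn_add_half_mul_norm_sub_sq {s : Set E} {φ : E → ℝ}
    (hφ : ConvexOn ℝ s φ) (L : ℝ) (w : E) :
    StrongConvexOn s L fun z => φ z + L / 2 * ‖z - w‖ ^ 2 := by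
  rw [strongConvexOn_iff_convex]
  refine (hφ.add (((-(L • innerₛₗ ℝ w)).convexOn hφ.1).add_const
    (L / 2 * ‖w‖ ^ 2))).congr fun z _ => ?_
  simp only [Pi.add_apply, norm_sub_sq_real, LinearMap.neg_apply, LinearMap.smul_apply,
    innerₛₗ_apply_apply, smul_eq_mul, real_inner_comm]
  ring

theorem ConvexOn.add_half_mul_norm_sub_sq_le_of_isMinOn {s : Set E} {φ : E → ℝ} {L : ℝ}
    {w x v : E} (hφ : ConvexOn ℝ s φ) (hx : x ∈ s)
    (hmin : IsMinOn (fun z => φ z + L / 2 * ‖z - w‖ ^ 2) s x) (hv : v ∈ s) :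
    φ x + L / 2 * ‖x - w‖ ^ 2 + L / 2 * ‖v - x‖ ^ 2 ≤ φ v + L / 2 * ‖v - w‖ ^ 2 :=
  (hφ.strongConvexOn_add_half_mul_norm_sub_sq L w).add_half_mul_norm_sub_sq_le_of_isMinOn hx hmin hv

variable {F : Type*} [NormedAddCommGroup F] [InnerProductSpace ℝ F]

theorem ContinuousLinearMap.inner_apply_le_sq_add_sq (K : E →L[ℝ] F) (d : E) (w : F) {β : ℝ}
    (hβ : 0 < β) : ⟪K d, w⟫ ≤ ‖K‖ ^ 2 / β / 2 * ‖d‖ ^ 2 + β / 2 * ‖w‖ ^ 2 := by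
  have hKd : ‖K d‖ ≤ ‖K‖ * ‖d‖ := K.le_opNorm d
  have hsq : 0 ≤ (‖K‖ * ‖d‖ - β * ‖w‖) ^ 2 / (2 * β) := by positivity
  calc ⟪K d, w⟫ ≤ ‖K d‖ * ‖w‖ := real_inner_le_norm _ _
    _ ≤ ‖K‖ * ‖d‖ * ‖w‖ := by gcongr
    _ ≤ ‖K‖ ^ 2 / β / 2 * ‖d‖ ^ 2 + β / 2 * ‖w‖ ^ 2 := by
      have : (‖K‖ * ‖d‖ - β * ‖w‖) ^ 2 / (2 * β)
          = ‖K‖ ^ 2 / β / 2 * ‖d‖ ^ 2 + β / 2 * ‖w‖ ^ 2 - ‖K‖ * ‖d‖ * ‖w‖ := by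
        field_simp; ring
      linarith

def lagrangian (f : E → ℝ) (g : F → ℝ) (K : E →L[ℝ] F) (x : E) (y : F) : ℝ :=
  f x + ⟪K x, y⟫ - g y

variable {f : E → ℝ} {g : F → ℝ} {Sf : Set E} {Sg : Set F} {K : E →L[ℝ] F}

theorem lagrangian_sub_le_of_isMaxOn {β : ℝ} {xhat : E} {y ydot w : F} (hg : ConvexOn ℝ Sg g)
    (hβ : 0 < β) (hy : y ∈ Sg)
    (hmax : IsMaxOn (fun z => ⟪K xhat, z⟫ - g z - β / 2 * ‖z - ydot‖ ^ 2) Sg y) (x : E)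
    (hw : w ∈ Sg) :
    lagrangian f g K x w - β / 2 * ‖w - ydot‖ ^ 2 ≤
      lagrangian f g K x y - β / 2 * ‖y - ydot‖ ^ 2 + ‖K‖ ^ 2 / β / 2 * ‖x - xhat‖ ^ 2 := by
  have hmin : IsMinOn (fun z => (g z - ⟪K xhat, z⟫) + β / 2 * ‖z - ydot‖ ^ 2) Sg y :=
    isMinOn_iff.2 fun z hz => by linarith [isMaxOn_iff.1 hmax z hz]
  have hthree := (hg.sub ((innerₛₗ ℝ (K xhat)).concaveOn hg.1)
    ).add_half_mul_norm_sub_sq_le_of_isMinOn hy hmin hw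
  have hyoung := K.inner_apply_le_sq_add_sq (x - xhat) (w - y) hβ
  simp only [lagrangian, map_sub, inner_sub_left, inner_sub_right] at hyoung ⊢
  simp only [Pi.sub_apply, innerₛₗ_apply_apply] at hthree
  linarith

theorem add_inner_le_of_isMinOn_adjoint [CompleteSpace E] [CompleteSpace F] {L : ℝ}
    {xhat x v : E} {y : F} (hf : ConvexOn ℝ Sf f) (hx : x ∈ Sf)
    (hmin : IsMinOn (fun z => f z + ⟪(ContinuousLinearMap.adjoint K) y, z⟫ +
      L / 2 * ‖z - xhat‖ ^ 2) Sf x) (hv : v ∈ Sf) :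
    f x + ⟪K x, y⟫ + L / 2 * ‖x - xhat‖ ^ 2 + L / 2 * ‖v - x‖ ^ 2 ≤
      f v + ⟪K v, y⟫ + L / 2 * ‖v - xhat‖ ^ 2 := by
  have h := (hf.add ((innerₛₗ ℝ (ContinuousLinearMap.adjoint K y)).convexOn hf.1)
    ).add_half_mul_norm_sub_sq_le_of_isMinOn hx hmin hv
  simpa only [Pi.add_apply, innerₛₗ_apply_apply, ContinuousLinearMap.adjoint_inner_left,
    real_inner_comm y] using h

theorem asgard_descent_step {t β β' L' D : ℝ} {x₁ x₂ xhat₁ xt : E} {ytil₁ y₂ ydot : F}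
    (hf : ConvexOn ℝ Sf f) (hg : ConvexOn ℝ Sg g) (ht0 : 0 ≤ t) (ht1 : t ≤ 1)
    (hβ : (1 - t) * β ≤ β') (hx₁ : x₁ ∈ Sf) (hxt : xt ∈ Sf) (hytil₁ : ytil₁ ∈ Sg)
    (hy₂ : y₂ ∈ Sg) (hD : lagrangian f g K x₁ y₂ - β / 2 * ‖y₂ - ydot‖ ^ 2 ≤ D)
    (hprimal : ∀ v ∈ Sf, f x₂ + ⟪K x₂, y₂⟫ + L' / 2 * ‖x₂ - xhat₁‖ ^ 2 + L' / 2 * ‖v - x₂‖ ^ 2 ≤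
      f v + ⟪K v, y₂⟫ + L' / 2 * ‖v - xhat₁‖ ^ 2) :
    lagrangian f g K x₂ y₂ - β' / 2 * ‖y₂ - ydot‖ ^ 2 + L' / 2 * ‖x₂ - xhat₁‖ ^ 2
        - lagrangian f g K xt ((1 - t) • ytil₁ + t • y₂)
        + L' / 2 * ‖(1 - t) • x₁ + t • xt - x₂‖ ^ 2 ≤
      (1 - t) * (D - lagrangian f g K xt ytil₁)
        + L' / 2 * ‖(1 - t) • x₁ + t • xt - xhat₁‖ ^ 2 := by
  have h1t : 0 ≤ 1 - t := sub_nonneg.2 ht1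
  have hmix := hprimal _ (hf.1 hx₁ hxt h1t ht0 (by ring))
  have hfmix := hf.2 hx₁ hxt h1t ht0 (by ring)
  have hgmix := hg.2 hytil₁ hy₂ h1t ht0 (by ring)
  have hD' := mul_le_mul_of_nonneg_left hD h1t
  have hβ' := mul_le_mul_of_nonneg_right hβ (sq_nonneg ‖y₂ - ydot‖)
  simp only [lagrangian, smul_eq_mul, map_add, map_smul, inner_add_left, inner_add_right,
    real_inner_smul_left, real_inner_smul_right] at hmix hfmix hgmix hD' ⊢
  linarith

end ProximalInequalities

structure IsAsgardStepSize (τ : ℕ → ℝ) : Prop where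
  zero : τ 0 = 1
  succ : ∀ k, τ (k + 1) ∈ Ioo (0 : ℝ) 1 ∧
    (τ (k + 1)) ^ 3 + (τ (k + 1)) ^ 2 + (τ k) ^ 2 * τ (k + 1) - (τ k) ^ 2 = 0

namespace IsAsgardStepSize

variable {τ β : ℕ → ℝ}

theorem pos (hτ : IsAsgardStepSize τ) : ∀ k, 0 < τ k
  | 0 => by simp [hτ.zero]
  | k + 1 => (hτ.succ k).1.1

theorem le_one (hτ : IsAsgardStepSize τ) : ∀ k, τ k ≤ 1
  | 0 => hτ.zero.le
  | k + 1 => (hτ.succ k).1.2.le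

theorem sq_mul_one_add (hτ : IsAsgardStepSize τ) (k : ℕ) :
    τ (k + 1) ^ 2 * (1 + τ (k + 1)) = τ k ^ 2 * (1 - τ (k + 1)) := by
  linear_combination (hτ.succ k).2

theorem one_le_mul_succ (hτ : IsAsgardStepSize τ) (k : ℕ) : 1 ≤ τ k * (k + 1) := by
  induction k with
  | zero => simp [hτ.zero]
  | succ k ih =>
    have hcubic := hτ.sq_mul_one_add k
    have hs : 0 < τ (k + 1) := hτ.pos (k + 1)
    have hr : 0 < τ k := hτ.pos k
    set s := τ (k + 1)
    set r := τ k
    set c : ℝ := k + 2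
    have hc : 2 ≤ c := by linarith [(Nat.cast_nonneg k : (0 : ℝ) ≤ k)]
    push_cast
    -- If `s (k + 2) < 1`, then with `c = k + 2` the cubic forces
    -- `c² ≤ r² (c - 1)² c² < r² (1 - s) c³ (c - 1) = (s c)² (c + s c) (c - 1) < c² - 1`.
    by_contra! hsc
    replace hsc : s * c < 1 := by linarith
    replace ih : 1 ≤ r * (c - 1) := by linarith
    have h1 : c ^ 2 ≤ r ^ 2 * (c - 1) ^ 2 * c ^ 2 := by
      have : 1 ≤ (r * (c - 1)) ^ 2 := one_le_pow₀ ih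
      nlinarith
    have h2 : r ^ 2 * (c - 1) ^ 2 * c ^ 2 < r ^ 2 * (1 - s) * c ^ 3 * (c - 1) := by
      have hpos : 0 < r ^ 2 * c ^ 2 * (c - 1) := by
        have : 0 < c - 1 := by linarith
        positivity
      have := mul_lt_mul_of_pos_left (show c - 1 < (1 - s) * c by nlinarith) hpos
      linarith
    have h3 : r ^ 2 * (1 - s) * c ^ 3 * (c - 1) = (s * c) ^ 2 * (c + s * c) * (c - 1) := by
      linear_combination (-(c ^ 3 * (c - 1))) * hcubic
    have h4 : (s * c) ^ 2 * (c + s * c) < c + 1 := by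
      have hsc0 : 0 < s * c := by positivity
      have : (s * c) ^ 2 < 1 := by nlinarith
      nlinarith
    nlinarith

theorem sq_div_beta_succ (hτ : IsAsgardStepSize τ) (hβ : ∀ k, β (k + 1) = β k / (1 + τ (k + 1)))
    (k : ℕ) : τ (k + 1) ^ 2 / β (k + 1) = (1 - τ (k + 1)) * (τ k ^ 2 / β k) := by
  rw [hβ k, div_div_eq_mul_div, hτ.sq_mul_one_add k]
  ring

theorem sq_div_beta_le (hτ : IsAsgardStepSize τ) (hβ0 : 0 < β 0)
    (hβ : ∀ k, β (k + 1) = β k / (1 + τ (k + 1))) (k : ℕ) :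
    τ k ^ 2 / β k ≤ 1 / (β 0 * (k + 1)) := by
  induction k with
  | zero => simp [hτ.zero]
  | succ k ih =>
    have h1s : 0 ≤ 1 - τ (k + 1) := sub_nonneg.2 (hτ.le_one _)
    have hs := hτ.one_le_mul_succ (k + 1)
    push_cast at hs ⊢
    calc τ (k + 1) ^ 2 / β (k + 1) ≤ (1 - τ (k + 1)) * (1 / (β 0 * (k + 1))) := by
          rw [hτ.sq_div_beta_succ hβ k]; exact mul_le_mul_of_nonneg_left ih h1s
      _ ≤ 1 / (β 0 * (k + 1 + 1)) := by
          rw [mul_one_div, div_le_div_iff₀ (by positivity) (by positivity)]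
          nlinarith

theorem beta_pos (hτ : IsAsgardStepSize τ) (hβ0 : 0 < β 0)
    (hβ : ∀ k, β (k + 1) = β k / (1 + τ (k + 1))) : ∀ k, 0 < β k
  | 0 => hβ0
  | k + 1 => by rw [hβ k]; exact div_pos (hτ.beta_pos hβ0 hβ k) (by linarith [hτ.pos (k + 1)])

theorem beta_mul_le (hτ : IsAsgardStepSize τ) (hβ0 : 0 < β 0)
    (hβ : ∀ k, β (k + 1) = β k / (1 + τ (k + 1))) (k : ℕ) : β k * (k + 2) ≤ 2 * β 0 := by
  induction k with
  | zero => norm_num [mul_comm]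
  | succ k ih =>
    have hs := hτ.one_le_mul_succ (k + 1)
    have hβk := hτ.beta_pos hβ0 hβ k
    push_cast at hs ⊢
    rw [hβ k, div_mul_eq_mul_div, div_le_iff₀ (by linarith [hτ.pos (k + 1)])]
    nlinarith

end IsAsgardStepSize

section Iteration

variable {E F : Type*} [NormedAddCommGroup E] [InnerProductSpace ℝ E] [CompleteSpace E]
  [NormedAddCommGroup F] [InnerProductSpace ℝ F] [CompleteSpace F]

structure IsAsgardRun (f : E → ℝ) (Sf : Set E) (g : F → ℝ) (Sg : Set F) (K : E →L[ℝ] F)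
    (ydot : F) (τ β L η : ℕ → ℝ) (x xhat : ℕ → E) (y ytil : ℕ → F) : Prop where
  stepSize : IsAsgardStepSize τ
  beta_zero_pos : 0 < β 0
  beta_succ : ∀ k, β (k + 1) = β k / (1 + τ (k + 1))
  L_eq : ∀ k, L k = ‖K‖ ^ 2 / β k
  eta_succ : ∀ k, η (k + 1) = (1 - τ k) * τ k / ((τ k) ^ 2 + (L (k + 1) / L k) * τ (k + 1))
  x_zero_mem : x 0 ∈ Sf
  xhat_zero : xhat 0 = x 0
  ytil_zero_mem : ytil 0 ∈ Sg
  y_succ : ∀ k, y (k + 1) ∈ Sg ∧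
    IsMaxOn (fun z => ⟪K (xhat k), z⟫ - g z - β k / 2 * ‖z - ydot‖ ^ 2) Sg (y (k + 1))
  x_succ : ∀ k, x (k + 1) ∈ Sf ∧
    IsMinOn (fun z => f z + ⟪(ContinuousLinearMap.adjoint K) (y (k + 1)), z⟫ +
      L k / 2 * ‖z - xhat k‖ ^ 2) Sf (x (k + 1))
  xhat_succ : ∀ k, xhat (k + 1) = x (k + 1) + η (k + 1) • (x (k + 1) - x k)
  ytil_succ : ∀ k, ytil (k + 1) = (1 - τ k) • ytil k + τ k • y (k + 1)

noncomputable def asgardEnergy (f : E → ℝ) (g : F → ℝ) (K : E →L[ℝ] F) (ydot : F) (τ β L : ℕ → ℝ)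
    (x xhat : ℕ → E) (y ytil : ℕ → F) (xt : E) (j : ℕ) : ℝ :=
  lagrangian f g K (x (j + 1)) (y (j + 1)) - β j / 2 * ‖y (j + 1) - ydot‖ ^ 2
    + L j / 2 * ‖x (j + 1) - xhat j‖ ^ 2 - lagrangian f g K xt (ytil (j + 1))
    + L j * τ j ^ 2 / 2 * ‖xt - (x j + (τ j)⁻¹ • (x (j + 1) - x j))‖ ^ 2

namespace IsAsgardRun

variable {f : E → ℝ} {Sf : Set E} {g : F → ℝ} {Sg : Set F} {K : E →L[ℝ] F} {ydot : F}
  {τ β L η : ℕ → ℝ} {x xhat : ℕ → E} {y ytil : ℕ → F}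

theorem beta_pos (h : IsAsgardRun f Sf g Sg K ydot τ β L η x xhat y ytil) (k : ℕ) : 0 < β k :=
  h.stepSize.beta_pos h.beta_zero_pos h.beta_succ k

theorem L_nonneg (h : IsAsgardRun f Sf g Sg K ydot τ β L η x xhat y ytil) (k : ℕ) : 0 ≤ L k := by
  rw [h.L_eq k]; exact div_nonneg (sq_nonneg _) (h.beta_pos k).le

theorem L_succ (h : IsAsgardRun f Sf g Sg K ydot τ β L η x xhat y ytil) (k : ℕ) :
    L (k + 1) = (1 + τ (k + 1)) * L k := by
  rw [h.L_eq, h.L_eq, h.beta_succ, div_div_eq_mul_div]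
  ring

theorem x_mem (h : IsAsgardRun f Sf g Sg K ydot τ β L η x xhat y ytil) : ∀ k, x k ∈ Sf
  | 0 => h.x_zero_mem
  | k + 1 => (h.x_succ k).1

theorem ytil_mem (h : IsAsgardRun f Sf g Sg K ydot τ β L η x xhat y ytil) (hSg : Convex ℝ Sg) :
    ∀ k, ytil k ∈ Sg
  | 0 => h.ytil_zero_mem
  | k + 1 => by
    rw [h.ytil_succ k]
    exact hSg (h.ytil_mem hSg k) (h.y_succ k).1 (sub_nonneg.2 (h.stepSize.le_one k))
      (h.stepSize.pos k).le (by ring)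

theorem lagrangian_sub_le (h : IsAsgardRun f Sf g Sg K ydot τ β L η x xhat y ytil)
    (hg : ConvexOn ℝ Sg g) (k : ℕ) (x' : E) {w : F} (hw : w ∈ Sg) :
    lagrangian f g K x' w - β k / 2 * ‖w - ydot‖ ^ 2 ≤
      lagrangian f g K x' (y (k + 1)) - β k / 2 * ‖y (k + 1) - ydot‖ ^ 2
        + L k / 2 * ‖x' - xhat k‖ ^ 2 := by
  rw [h.L_eq k]
  exact lagrangian_sub_le_of_isMaxOn hg (h.beta_pos k) (h.y_succ k).1 (h.y_succ k).2 x' hw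

theorem primal_le (h : IsAsgardRun f Sf g Sg K ydot τ β L η x xhat y ytil)
    (hf : ConvexOn ℝ Sf f) (k : ℕ) {v : E} (hv : v ∈ Sf) :
    f (x (k + 1)) + ⟪K (x (k + 1)), y (k + 1)⟫ + L k / 2 * ‖x (k + 1) - xhat k‖ ^ 2
        + L k / 2 * ‖v - x (k + 1)‖ ^ 2 ≤
      f v + ⟪K v, y (k + 1)⟫ + L k / 2 * ‖v - xhat k‖ ^ 2 :=
  add_inner_le_of_isMinOn_adjoint hf (h.x_succ k).1 (h.x_succ k).2 hv

theorem xhat_succ_eq (h : IsAsgardRun f Sf g Sg K ydot τ β L η x xhat y ytil) (hK : ‖K‖ ≠ 0)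
    (k : ℕ) : xhat (k + 1) =
      (1 - τ (k + 1)) • x (k + 1) + τ (k + 1) • (x k + (τ k)⁻¹ • (x (k + 1) - x k)) := by
  have hτ := h.stepSize
  have hLk : L k ≠ 0 := by
    rw [h.L_eq k]; exact div_ne_zero (pow_ne_zero 2 hK) (h.beta_pos k).ne'
  have hη : η (k + 1) = τ (k + 1) * (1 - τ k) / τ k := by
    have hd : τ k ^ 2 + (1 + τ (k + 1)) * τ (k + 1) ≠ 0 := by
      have := hτ.pos k; have := hτ.pos (k + 1); positivity
    rw [h.eta_succ k, h.L_succ k, mul_div_cancel_right₀ _ hLk,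
      div_eq_div_iff hd (hτ.pos k).ne']
    linear_combination (τ k - 1) * (hτ.succ k).2
  have := (hτ.pos k).ne'
  rw [h.xhat_succ k, hη]
  match_scalars <;> field_simp <;> ring

theorem gap_le_energy (h : IsAsgardRun f Sf g Sg K ydot τ β L η x xhat y ytil)
    (hg : ConvexOn ℝ Sg g) {yt : F} (hyt : yt ∈ Sg) (xt : E) (j : ℕ) :
    lagrangian f g K (x (j + 1)) yt - lagrangian f g K xt (ytil (j + 1)) ≤
      asgardEnergy f g K ydot τ β L x xhat y ytil xt j + β j / 2 * ‖yt - ydot‖ ^ 2 := by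
  have hdual := h.lagrangian_sub_le hg j (x (j + 1)) hyt
  have hL := h.L_nonneg j
  have hz : 0 ≤ L j * τ j ^ 2 / 2 * ‖xt - (x j + (τ j)⁻¹ • (x (j + 1) - x j))‖ ^ 2 := by
    positivity
  unfold asgardEnergy
  linarith

theorem energy_zero_le (h : IsAsgardRun f Sf g Sg K ydot τ β L η x xhat y ytil)
    (hf : ConvexOn ℝ Sf f) {xt : E} (hxt : xt ∈ Sf) :
    asgardEnergy f g K ydot τ β L x xhat y ytil xt 0 ≤ L 0 / 2 * ‖xt - x 0‖ ^ 2 := by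
  have hprimal := h.primal_le hf 0 hxt
  have hβ := h.beta_pos 0
  have hytil : ytil 1 = y 1 := by simp [h.ytil_succ 0, h.stepSize.zero]
  rw [zero_add, h.xhat_zero] at hprimal
  simp only [asgardEnergy, lagrangian, zero_add, hytil, h.xhat_zero, h.stepSize.zero, inv_one,
    one_smul, add_sub_cancel, one_pow, mul_one]
  nlinarith [sq_nonneg ‖y 1 - ydot‖]

theorem energy_succ_le (h : IsAsgardRun f Sf g Sg K ydot τ β L η x xhat y ytil)
    (hf : ConvexOn ℝ Sf f) (hg : ConvexOn ℝ Sg g) {xt : E} (hxt : xt ∈ Sf) (j : ℕ) :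
    asgardEnergy f g K ydot τ β L x xhat y ytil xt (j + 1) ≤
      (1 - τ (j + 1)) * asgardEnergy f g K ydot τ β L x xhat y ytil xt j := by
  have hτ := h.stepSize
  have ht := hτ.pos (j + 1)
  have hβ : (1 - τ (j + 1)) * β j ≤ β (j + 1) := by
    rw [h.beta_succ, le_div_iff₀ (by linarith)]
    nlinarith [mul_nonneg (sq_nonneg (τ (j + 1))) (h.beta_pos j).le]
  have hstep := asgard_descent_step hf hg ht.le (hτ.le_one _) hβ (h.x_mem _) hxt
    (h.ytil_mem hg.1 (j + 1)) (h.y_succ _).1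
    (h.lagrangian_sub_le hg j (x (j + 1)) (h.y_succ (j + 1)).1)
    (fun v hv => h.primal_le hf (j + 1) hv)
  rw [asgardEnergy, asgardEnergy, h.ytil_succ (j + 1)]
  set t := τ (j + 1)
  set z₁ := x j + (τ j)⁻¹ • (x (j + 1) - x j)
  set z₂ := x (j + 1) + t⁻¹ • (x (j + 1 + 1) - x (j + 1))
  have hz₂ : (1 - t) • x (j + 1) + t • xt - x (j + 1 + 1) = t • (xt - z₂) := by
    simp only [z₂]
    match_scalars <;> field_simp; ring
  have hz₁ : L (j + 1) * ‖(1 - t) • x (j + 1) + t • xt - xhat (j + 1)‖ ^ 2 =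
      L (j + 1) * ‖t • (xt - z₁)‖ ^ 2 := by
    rcases eq_or_ne ‖K‖ 0 with hK | hK
    · simp [h.L_eq, hK]
    · rw [h.xhat_succ_eq hK j]
      congr 3
      module
  have hLτ : L (j + 1) * t ^ 2 * ‖xt - z₁‖ ^ 2 = (1 - t) * (L j * τ j ^ 2) * ‖xt - z₁‖ ^ 2 := by
    rw [h.L_succ]
    linear_combination L j * ‖xt - z₁‖ ^ 2 * hτ.sq_mul_one_add j
  rw [hz₂] at hstep
  simp only [norm_smul, mul_pow, Real.norm_eq_abs, sq_abs] at hstep hz₁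
  linarith

theorem energy_le (h : IsAsgardRun f Sf g Sg K ydot τ β L η x xhat y ytil)
    (hf : ConvexOn ℝ Sf f) (hg : ConvexOn ℝ Sg g) {xt : E} (hxt : xt ∈ Sf) (j : ℕ) :
    asgardEnergy f g K ydot τ β L x xhat y ytil xt j ≤
      ‖K‖ ^ 2 / (2 * β 0 * (j + 1)) * ‖x 0 - xt‖ ^ 2 := by
  have hτ := h.stepSize
  have hdecay : ∀ j, asgardEnergy f g K ydot τ β L x xhat y ytil xt j ≤
      τ j ^ 2 / β j * (‖K‖ ^ 2 / 2 * ‖x 0 - xt‖ ^ 2) := by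
    intro j
    induction j with
    | zero =>
      convert h.energy_zero_le hf hxt using 1
      rw [hτ.zero, h.L_eq, norm_sub_rev]
      ring
    | succ j ih =>
      calc asgardEnergy f g K ydot τ β L x xhat y ytil xt (j + 1)
          ≤ (1 - τ (j + 1)) * asgardEnergy f g K ydot τ β L x xhat y ytil xt j :=
            h.energy_succ_le hf hg hxt j
        _ ≤ (1 - τ (j + 1)) * (τ j ^ 2 / β j * (‖K‖ ^ 2 / 2 * ‖x 0 - xt‖ ^ 2)) :=
            mul_le_mul_of_nonneg_left ih (sub_nonneg.2 (hτ.le_one _))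
        _ = τ (j + 1) ^ 2 / β (j + 1) * (‖K‖ ^ 2 / 2 * ‖x 0 - xt‖ ^ 2) := by
            rw [hτ.sq_div_beta_succ h.beta_succ]; ring
  calc asgardEnergy f g K ydot τ β L x xhat y ytil xt j
      ≤ τ j ^ 2 / β j * (‖K‖ ^ 2 / 2 * ‖x 0 - xt‖ ^ 2) := hdecay j
    _ ≤ 1 / (β 0 * (j + 1)) * (‖K‖ ^ 2 / 2 * ‖x 0 - xt‖ ^ 2) :=
        mul_le_mul_of_nonneg_right (hτ.sq_div_beta_le h.beta_zero_pos h.beta_succ j) (by positivity)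
    _ = ‖K‖ ^ 2 / (2 * β 0 * (j + 1)) * ‖x 0 - xt‖ ^ 2 := by
        field_simp

end IsAsgardRun

end Iteration

theorem stmt4_general {p n : ℕ}
    (f : EuclideanSpace ℝ (Fin p) → ℝ) (Sf : Set (EuclideanSpace ℝ (Fin p)))
    (gstar : EuclideanSpace ℝ (Fin n) → ℝ) (Sg : Set (EuclideanSpace ℝ (Fin n)))
    (K : EuclideanSpace ℝ (Fin p) →L[ℝ] EuclideanSpace ℝ (Fin n))
    (hf : ConvexOn ℝ Sf f) (hgstar : ConvexOn ℝ Sg gstar)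
    -- the sets defining the gap function, containing the saddle point
    (X : Set (EuclideanSpace ℝ (Fin p))) (Y : Set (EuclideanSpace ℝ (Fin n)))
    (hXSf : X ⊆ Sf) (hYSg : Y ⊆ Sg)
    -- parameters of ASGARD+
    (τ β L η : ℕ → ℝ)
    (hτ0 : τ 0 = 1)
    (hτ : ∀ k, τ (k + 1) ∈ Ioo (0 : ℝ) 1 ∧
      (τ (k + 1)) ^ 3 + (τ (k + 1)) ^ 2 + (τ k) ^ 2 * τ (k + 1) - (τ k) ^ 2 = 0)
    (hβ0 : 0 < β 0)
    (hβ : ∀ k, β (k + 1) = β k / (1 + τ (k + 1)))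
    (hL : ∀ k, L k = ‖K‖ ^ 2 / β k)
    (hη : ∀ k, η (k + 1) = (1 - τ k) * τ k / ((τ k) ^ 2 + (L (k + 1) / L k) * τ (k + 1)))
    -- the iterates of ASGARD+
    (ydot : EuclideanSpace ℝ (Fin n))
    (x xhat : ℕ → EuclideanSpace ℝ (Fin p)) (yseq ytil : ℕ → EuclideanSpace ℝ (Fin n))
    (hx0 : x 0 ∈ Sf) (hxhat0 : xhat 0 = x 0) (hytil0 : ytil 0 ∈ Sg)
    (hyup : ∀ k, yseq (k + 1) ∈ Sg ∧
      IsMaxOn (fun z => ⟪K (xhat k), z⟫ - gstar z - β k / 2 * ‖z - ydot‖ ^ 2) Sg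
        (yseq (k + 1)))
    (hxup : ∀ k, x (k + 1) ∈ Sf ∧
      IsMinOn (fun z => f z + ⟪(ContinuousLinearMap.adjoint K) (yseq (k + 1)), z⟫ +
        L k / 2 * ‖z - xhat k‖ ^ 2) Sf (x (k + 1)))
    (hxhat : ∀ k, xhat (k + 1) = x (k + 1) + η (k + 1) • (x (k + 1) - x k))
    (hytil : ∀ k, ytil (k + 1) = (1 - τ k) • ytil k + τ k • yseq (k + 1))
    -- the suprema appearing in the bound are finite
    (hXb : BddAbove ((fun x' => ‖x 0 - x'‖ ^ 2) '' X))
    (hYb : BddAbove ((fun y' => ‖y' - ydot‖ ^ 2) '' Y)) :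
    ∀ k : ℕ, 1 ≤ k → ∀ xt ∈ X, ∀ yt ∈ Y,
      (f (x k) + ⟪K (x k), yt⟫ - gstar yt) - (f xt + ⟪K xt, ytil k⟫ - gstar (ytil k)) ≤
        ‖K‖ ^ 2 / (2 * β 0 * (k : ℝ)) * sSup ((fun x' => ‖x 0 - x'‖ ^ 2) '' X) +
        β 0 / ((k : ℝ) + 1) * sSup ((fun y' => ‖y' - ydot‖ ^ 2) '' Y) := by
  have hrun : IsAsgardRun f Sf gstar Sg K ydot τ β L η x xhat yseq ytil :=
    ⟨⟨hτ0, hτ⟩, hβ0, hβ, hL, hη, hx0, hxhat0, hytil0, hyup, hxup, hxhat, hytil⟩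
  intro k hk xt hxt yt hyt
  obtain ⟨j, rfl⟩ := Nat.exists_eq_add_of_le' hk
  have hDx : ‖x 0 - xt‖ ^ 2 ≤ sSup ((fun x' => ‖x 0 - x'‖ ^ 2) '' X) :=
    le_csSup hXb ⟨xt, hxt, rfl⟩
  have hDy : ‖yt - ydot‖ ^ 2 ≤ sSup ((fun y' => ‖y' - ydot‖ ^ 2) '' Y) :=
    le_csSup hYb ⟨yt, hyt, rfl⟩
  have hβj : β j / 2 ≤ β 0 / (j + 2) := by
    rw [div_le_div_iff₀ two_pos (by positivity)]
    linarith [hrun.stepSize.beta_mul_le hβ0 hβ j]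
  calc lagrangian f gstar K (x (j + 1)) yt - lagrangian f gstar K xt (ytil (j + 1))
      ≤ asgardEnergy f gstar K ydot τ β L x xhat yseq ytil xt j + β j / 2 * ‖yt - ydot‖ ^ 2 :=
        hrun.gap_le_energy hgstar (hYSg hyt) xt j
    _ ≤ ‖K‖ ^ 2 / (2 * β 0 * (j + 1)) * ‖x 0 - xt‖ ^ 2 + β 0 / (j + 2) * ‖yt - ydot‖ ^ 2 :=
        add_le_add (hrun.energy_le hf hgstar (hXSf hxt) j)
          (mul_le_mul_of_nonneg_right hβj (sq_nonneg _))
    _ ≤ _ := by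
        push_cast
        rw [add_assoc (j : ℝ) 1 1, one_add_one_eq_two]
        gcongr

/-- Theorem 1(a): gap-function bound of ASGARD+ in the general convex
case `μ_f = μ_{g*} = 0`. For all `k ≥ 1`,
`G_{X×Y}(x^k, ỹ^k) ≤ (‖K‖²/(2β₀k)) sup_{x∈X}‖x⁰-x‖² + (β₀/(k+1)) sup_{y∈Y}‖y-ẏ‖²`,
stated equivalently as the bound on `L(x^k, ỹ) - L(x̃, ỹ^k)` for all `x̃ ∈ X, ỹ ∈ Y`. -/
theorem stmt4 {p n : ℕ}
    (f : EuclideanSpace ℝ (Fin p) → ℝ) (Sf : Set (EuclideanSpace ℝ (Fin p)))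
    (gstar : EuclideanSpace ℝ (Fin n) → ℝ) (Sg : Set (EuclideanSpace ℝ (Fin n)))
    (K : EuclideanSpace ℝ (Fin p) →L[ℝ] EuclideanSpace ℝ (Fin n))
    (hSf : Convex ℝ Sf) (hSg : Convex ℝ Sg)
    (hSfc : IsClosed Sf) (hSgc : IsClosed Sg)
    (hf : ConvexOn ℝ Sf f) (hgstar : ConvexOn ℝ Sg gstar)
    -- a saddle point of the Lagrangian exists
    (xs : EuclideanSpace ℝ (Fin p)) (ys : EuclideanSpace ℝ (Fin n))
    (hxs : xs ∈ Sf) (hys : ys ∈ Sg)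
    (hsaddle : ∀ x ∈ Sf, ∀ y ∈ Sg,
      f xs + ⟪K xs, y⟫ - gstar y ≤ f xs + ⟪K xs, ys⟫ - gstar ys ∧
      f xs + ⟪K xs, ys⟫ - gstar ys ≤ f x + ⟪K x, ys⟫ - gstar ys)
    -- the sets defining the gap function, containing the saddle point
    (X : Set (EuclideanSpace ℝ (Fin p))) (Y : Set (EuclideanSpace ℝ (Fin n)))
    (hXSf : X ⊆ Sf) (hYSg : Y ⊆ Sg)
    (hXc : Convex ℝ X) (hYc : Convex ℝ Y) (hXcl : IsClosed X) (hYcl : IsClosed Y)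
    (hxsX : xs ∈ X) (hysY : ys ∈ Y)
    -- parameters of ASGARD+
    (τ β L η : ℕ → ℝ)
    (hτ0 : τ 0 = 1)
    (hτ : ∀ k, τ (k + 1) ∈ Ioo (0 : ℝ) 1 ∧
      (τ (k + 1)) ^ 3 + (τ (k + 1)) ^ 2 + (τ k) ^ 2 * τ (k + 1) - (τ k) ^ 2 = 0)
    (hβ0 : 0 < β 0)
    (hβ : ∀ k, β (k + 1) = β k / (1 + τ (k + 1)))
    (hL : ∀ k, L k = ‖K‖ ^ 2 / β k)
    (hη : ∀ k, η (k + 1) = (1 - τ k) * τ k / ((τ k) ^ 2 + (L (k + 1) / L k) * τ (k + 1)))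
    -- the iterates of ASGARD+
    (ydot : EuclideanSpace ℝ (Fin n))
    (x xhat : ℕ → EuclideanSpace ℝ (Fin p)) (yseq ytil : ℕ → EuclideanSpace ℝ (Fin n))
    (hx0 : x 0 ∈ Sf) (hxhat0 : xhat 0 = x 0) (hytil0 : ytil 0 ∈ Sg)
    (hyup : ∀ k, yseq (k + 1) ∈ Sg ∧
      IsMaxOn (fun z => ⟪K (xhat k), z⟫ - gstar z - β k / 2 * ‖z - ydot‖ ^ 2) Sg
        (yseq (k + 1)))
    (hxup : ∀ k, x (k + 1) ∈ Sf ∧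
      IsMinOn (fun z => f z + ⟪(ContinuousLinearMap.adjoint K) (yseq (k + 1)), z⟫ +
        L k / 2 * ‖z - xhat k‖ ^ 2) Sf (x (k + 1)))
    (hxhat : ∀ k, xhat (k + 1) = x (k + 1) + η (k + 1) • (x (k + 1) - x k))
    (hytil : ∀ k, ytil (k + 1) = (1 - τ k) • ytil k + τ k • yseq (k + 1))
    -- the suprema appearing in the bound are finite
    (hXb : BddAbove ((fun x' => ‖x 0 - x'‖ ^ 2) '' X))
    (hYb : BddAbove ((fun y' => ‖y' - ydot‖ ^ 2) '' Y)) :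
    ∀ k : ℕ, 1 ≤ k → ∀ xt ∈ X, ∀ yt ∈ Y,
      (f (x k) + ⟪K (x k), yt⟫ - gstar yt) - (f xt + ⟪K xt, ytil k⟫ - gstar (ytil k)) ≤
        ‖K‖ ^ 2 / (2 * β 0 * (k : ℝ)) * sSup ((fun x' => ‖x 0 - x'‖ ^ 2) '' X) +
        β 0 / ((k : ℝ) + 1) * sSup ((fun y' => ‖y' - ydot‖ ^ 2) '' Y) :=
  stmt4_general f Sf gstar Sg K hf hgstar X Y hXSf hYSg τ β L η hτ0 hτ hβ0 hβ hL hη ydot x xhat yseq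
    ytil hx0 hxhat0 hytil0 hyup hxup hxhat hytil hXb hYb
end

section
/- Assume f and g* are merely convex (μ_f = μ_{g*} = 0), a saddle point (x⋆, y⋆) of L exists, and g is M_g-Lipschitz continuous on dom g. Run ASGARD+ with τ₀ := 1, and for k ≥ 0 let τ_{k+1} be the unique root in (0,1) of τ³ + τ² + τ_k² τ − τ_k² = 0, β_{k+1} := β_k/(1+τ_{k+1}), L_k := ‖K‖²/β_k, m_{k+1} := L_{k+1}/L_k, η_{k+1} := (1−τ_k)τ_k/(τ_k² + m_{k+1}τ_{k+1}). Then for all k ≥ 1, F(x^k) − F⋆ ≤ (‖K‖²/(2β₀k))‖x⁰ − x⋆‖² + (β₀/(k+1))(‖ẏ‖ + M_g)². -/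
/-!
ASGARD+ is analysed through Nesterov's smoothing
`g_β(u) = sup_{y ∈ dom g*} ⟨u, y⟩ - g*(y) - β/2 ‖y - ẏ‖²`, which is `(1/β)`-smooth and satisfies
`g_β ≤ g ≤ g_β + β/2 (‖ẏ‖ + M_g)²` (subgradients of `g` have norm at most `M_g`). The `y`-update
evaluates the gradient of `g_{β_k} ∘ K` at `x̂ᵏ`, so one iteration is a proximal gradient step;
the three-point inequality of the `x`-update at `(1 - τ_k) xᵏ + τ_k x⋆`, together with the saddle
point inequality, gives for the smoothed gap `a_k = f(xᵏ⁺¹) + g_{β_k}(K xᵏ⁺¹) - F⋆`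
`a_{k+1} ≤ (1 - τ_{k+1}) a_k + τ_{k+1}² L_{k+1}/2 (‖x⋆ - x̃ᵏ⁺¹‖² - ‖x⋆ - x̃ᵏ⁺²‖²)`,
where `x̂ᵏ = (1 - τ_k) xᵏ + τ_k x̃ᵏ`. The cubic defining `τ` makes the weights `τ_k² L_k` telescope,
and it also forces `τ_k ≥ 1/(k+1)`, whence `τ_k² L_k ≤ ‖K‖²/(β₀(k+1))` and `β_k ≤ 2β₀/(k+2)`.
-/

open RealInnerProductSpace Set Filter Topology

section ProximalStep

variable {E : Type*} [NormedAddCommGroup E] [InnerProductSpace ℝ E]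

lemma norm_one_sub_smul_add_smul_sq (u v : E) (t : ℝ) :
    ‖(1 - t) • u + t • v‖ ^ 2
      = (1 - t) * ‖u‖ ^ 2 + t * ‖v‖ ^ 2 - t * (1 - t) * ‖u - v‖ ^ 2 := by
  simp only [← real_inner_self_eq_norm_sq, inner_add_left, inner_add_right, inner_sub_left,
    inner_sub_right, real_inner_smul_left, real_inner_smul_right, real_inner_comm v u]
  ring

theorem ConvexOn.three_point_of_isMinOn {S : Set E} {φ : E → ℝ} (hφ : ConvexOn ℝ S φ)
    {c : ℝ} {a m z : E} (hm : m ∈ S)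
    (hmin : IsMinOn (fun w => φ w + c / 2 * ‖w - a‖ ^ 2) S m) (hz : z ∈ S) :
    φ m + c / 2 * ‖m - a‖ ^ 2 + c / 2 * ‖z - m‖ ^ 2 ≤ φ z + c / 2 * ‖z - a‖ ^ 2 := by
  -- compare `m` with the points `(1 - t) m + t z` of the segment and let `t → 0⁺`
  have hseg : ∀ t ∈ Ioo (0 : ℝ) 1, φ m + c / 2 * ‖m - a‖ ^ 2
      ≤ φ z + c / 2 * ‖z - a‖ ^ 2 - c / 2 * (1 - t) * ‖z - m‖ ^ 2 := by
    rintro t ⟨ht0, ht1⟩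
    have hmem : (1 - t) • m + t • z ∈ S := hφ.1 hm hz (by linarith) ht0.le (by ring)
    have hconv : φ ((1 - t) • m + t • z) ≤ (1 - t) * φ m + t * φ z :=
      hφ.2 hm hz (by linarith) ht0.le (by ring)
    have hsplit : (1 - t) • m + t • z - a = (1 - t) • (m - a) + t • (z - a) := by module
    have hmin_t := isMinOn_iff.mp hmin _ hmem
    simp only [hsplit, norm_one_sub_smul_add_smul_sq, sub_sub_sub_cancel_right,
      norm_sub_rev m z] at hmin_t
    refine le_of_mul_le_mul_left ?_ ht0
    linarith
  have hlim : Tendsto (fun t : ℝ => φ z + c / 2 * ‖z - a‖ ^ 2 - c / 2 * (1 - t) * ‖z - m‖ ^ 2)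
      (𝓝[>] 0) (𝓝 (φ z + c / 2 * ‖z - a‖ ^ 2 - c / 2 * ‖z - m‖ ^ 2)) := by
    simpa using (Continuous.tendsto (f := fun t : ℝ =>
      φ z + c / 2 * ‖z - a‖ ^ 2 - c / 2 * (1 - t) * ‖z - m‖ ^ 2) (by fun_prop) 0).mono_left
      nhdsWithin_le_nhds
  have := ge_of_tendsto hlim (by filter_upwards [Ioo_mem_nhdsGT zero_lt_one] using hseg)
  linarith

end ProximalStep

theorem ConvexOn.exists_subgradient {E : Type*} [TopologicalSpace E] [AddCommGroup E]
    [Module ℝ E] [IsTopologicalAddGroup E] [ContinuousSMul ℝ E] {g : E → ℝ}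
    (hg : ConvexOn ℝ univ g) (hgc : Continuous g) (u : E) :
    ∃ l : StrongDual ℝ E, ∀ z, g u + l (z - u) ≤ g z := by
  have hopen : IsOpen {p : E × ℝ | p.1 ∈ univ ∧ g p.1 < p.2} := by
    simpa using isOpen_lt (hgc.comp continuous_fst) continuous_snd
  -- separate `(u, g u)` from the open strict epigraph; the functional is negative on `(0, 1)`
  obtain ⟨F, hF⟩ := geometric_hahn_banach_open_point hg.convex_strict_epigraph hopen
    (x := (u, g u)) (by simp)
  set c := F (0, 1)
  have hsplit : ∀ z t, F (z, t) = F (z, 0) + t * c := fun z t => by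
    have : (z, t) = (z, 0) + t • ((0 : E), (1 : ℝ)) := by simp
    rw [this, map_add, map_smul, smul_eq_mul]
  have hc : c < 0 := by
    have := hF (u, g u + 1) ⟨trivial, by simp⟩
    rw [hsplit u, hsplit u (g u)] at this
    linarith
  have hz : ∀ z, F (z, 0) + g z * c ≤ F (u, 0) + g u * c := fun z => by
    refine le_of_forall_pos_lt_add fun ε hε => ?_
    have hεc : ε / c < 0 := div_neg_of_pos_of_neg hε hc
    have := hF (z, g z - ε / c) ⟨trivial, by simp only; linarith⟩
    rw [hsplit z, hsplit u (g u), sub_mul, div_mul_cancel₀ _ hc.ne] at this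
    linarith
  refine ⟨(-c)⁻¹ • F.comp (.inl ℝ E ℝ), fun z => ?_⟩
  have hlin : F.comp (.inl ℝ E ℝ) (z - u) = F (z, 0) - F (u, 0) := by
    rw [← map_sub]; simp
  have key : (F (z, 0) - F (u, 0)) / -c ≤ g z - g u := by
    rw [div_le_iff₀ (neg_pos.2 hc)]
    linarith [hz z]
  rw [smul_apply, hlin, smul_eq_mul, inv_mul_eq_div]
  linarith

noncomputable section Smoothing

variable {F : Type*} [NormedAddCommGroup F] [InnerProductSpace ℝ F]

/-- Nesterov's smoothing `g_b(u; ẏ)` of `g`, written through its conjugate `g*` with domain `S`.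
A junk `sSup` is avoided as long as the set is bounded above, e.g. by Fenchel–Young. -/
def nesterovSmoothing (gstar : F → ℝ) (S : Set F) (ydot : F) (b : ℝ) (u : F) : ℝ :=
  sSup ((fun z => ⟪u, z⟫ - gstar z - b / 2 * ‖z - ydot‖ ^ 2) '' S)

variable {g gstar : F → ℝ} {S : Set F} {ydot : F} {b : ℝ}

lemma le_nesterovSmoothing (hFY : ∀ z ∈ S, ∀ u, ⟪z, u⟫ - g u ≤ gstar z) (hb : 0 ≤ b)
    (u : F) {z : F} (hz : z ∈ S) :
    ⟪u, z⟫ - gstar z - b / 2 * ‖z - ydot‖ ^ 2 ≤ nesterovSmoothing gstar S ydot b u := by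
  refine le_csSup ⟨g u, ?_⟩ (mem_image_of_mem _ hz)
  rintro _ ⟨w, hw, rfl⟩
  have := hFY w hw u
  rw [real_inner_comm] at this
  nlinarith [sq_nonneg ‖w - ydot‖]

/-- The `(1/b)`-smoothness of `g_b`, with the quadratic model centred at the maximizer `y`
defining `g_b(a)`: the three-point inequality at `y` plus Young's inequality. -/
lemma nesterovSmoothing_le_of_isMaxOn (hS : Convex ℝ S) (hgstar : ConvexOn ℝ S gstar)
    (hb : 0 < b) {a y : F} (hy : y ∈ S)
    (hmax : IsMaxOn (fun z => ⟪a, z⟫ - gstar z - b / 2 * ‖z - ydot‖ ^ 2) S y) (u : F) :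
    nesterovSmoothing gstar S ydot b u ≤ ⟪a, y⟫ - gstar y - b / 2 * ‖y - ydot‖ ^ 2
      + ⟪y, u - a⟫ + 1 / (2 * b) * ‖u - a‖ ^ 2 := by
  have hconv : ConvexOn ℝ S (gstar - ⇑(innerSL ℝ a).toLinearMap) :=
    hgstar.sub ((innerSL ℝ a).toLinearMap.concaveOn hS)
  have hmin : IsMinOn (fun z => (gstar - ⇑(innerSL ℝ a).toLinearMap) z
      + b / 2 * ‖z - ydot‖ ^ 2) S y :=
    isMinOn_iff.mpr fun z hz => by
      have := isMaxOn_iff.mp hmax z hz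
      simp only [Pi.sub_apply, ContinuousLinearMap.coe_coe, innerSL_apply_apply]
      linarith
  refine csSup_le ⟨_, mem_image_of_mem _ hy⟩ ?_
  rintro _ ⟨z, hz, rfl⟩
  have hthree := hconv.three_point_of_isMinOn hy hmin hz
  simp only [Pi.sub_apply, ContinuousLinearMap.coe_coe, innerSL_apply_apply] at hthree
  have hCS : ⟪u - a, z - y⟫ ≤ ‖u - a‖ * ‖z - y‖ := real_inner_le_norm _ _
  have hYoung : ‖u - a‖ * ‖z - y‖ ≤ b / 2 * ‖z - y‖ ^ 2 + 1 / (2 * b) * ‖u - a‖ ^ 2 := by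
    have := two_mul_le_add_sq (b * ‖z - y‖) ‖u - a‖
    field_simp
    nlinarith
  have hsplit : ⟪u, z⟫ = ⟪a, z⟫ + ⟪y, u - a⟫ + ⟪u - a, z - y⟫ := by
    simp only [inner_sub_left, inner_sub_right, real_inner_comm y]; ring
  linarith

/-- Evaluate the supremum at a subgradient `v` of `g` at `u`: then `⟨u, v⟩ - g*(v) = g(u)`,
and `‖v‖ ≤ M` bounds the penalty. -/
lemma le_nesterovSmoothing_add [CompleteSpace F] (hg : ConvexOn ℝ univ g) {M : ℝ} (hM : 0 ≤ M)
    (hgLip : ∀ u v, |g u - g v| ≤ M * ‖u - v‖)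
    (hconj : ∀ y ∈ S, IsLUB {r : ℝ | ∃ u, r = ⟪y, u⟫ - g u} (gstar y))
    (hsub : ∀ u v, (∀ w, g u + ⟪v, w - u⟫ ≤ g w) → v ∈ S) (hb : 0 ≤ b) (u : F) :
    g u ≤ nesterovSmoothing gstar S ydot b u + b / 2 * (‖ydot‖ + M) ^ 2 := by
  have hgc : Continuous g := (LipschitzWith.of_dist_le_mul (K := M.toNNReal) fun u v => by
    simpa [Real.dist_eq, dist_eq_norm, hM] using hgLip u v).continuous
  obtain ⟨l, hl⟩ := hg.exists_subgradient hgc u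
  set v := (InnerProductSpace.toDual ℝ F).symm l
  have hv : ∀ w, g u + ⟪v, w - u⟫ ≤ g w := by
    simpa only [v, InnerProductSpace.toDual_symm_apply] using hl
  have hvS : v ∈ S := hsub u v hv
  have hv_norm : ‖v‖ ≤ M := by
    have h1 := hv (u + v)
    have h2 := (abs_le.mp (hgLip (u + v) u)).2
    simp only [add_sub_cancel_left, real_inner_self_eq_norm_sq] at h1 h2
    nlinarith [norm_nonneg v]
  have hgstar_v : gstar v ≤ ⟪v, u⟫ - g u := by
    refine (hconj v hvS).2 ?_
    rintro _ ⟨w, rfl⟩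
    have := hv w
    rw [inner_sub_right] at this
    linarith
  have hdist : ‖v - ydot‖ ^ 2 ≤ (‖ydot‖ + M) ^ 2 :=
    pow_le_pow_left₀ (norm_nonneg _) ((norm_sub_le _ _).trans (by linarith)) 2
  have := le_nesterovSmoothing (ydot := ydot) (fun z hz w => (hconj z hz).1 ⟨w, rfl⟩) hb u hvS
  rw [real_inner_comm] at this
  nlinarith

end Smoothing

lemma le_mul_sub_of_recursion {a θ w d : ℕ → ℝ} (h0 : a 0 ≤ w 0 * (d 0 - d 1))
    (hstep : ∀ k, a (k + 1) ≤ θ (k + 1) * a k + w (k + 1) * (d (k + 1) - d (k + 2)))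
    (hθ : ∀ k, 0 ≤ θ (k + 1)) (hw : ∀ k, θ (k + 1) * w k = w (k + 1)) (k : ℕ) :
    a k ≤ w k * (d 0 - d (k + 1)) := by
  induction k with
  | zero => exact h0
  | succ k ih =>
    calc a (k + 1)
        ≤ θ (k + 1) * (w k * (d 0 - d (k + 1))) + w (k + 1) * (d (k + 1) - d (k + 2)) := by
          linarith [hstep k, mul_le_mul_of_nonneg_left ih (hθ k)]
      _ = w (k + 1) * (d 0 - d (k + 1 + 1)) := by rw [← hw k]; ring

namespace Asgard

section Parameters

variable {τ β : ℕ → ℝ}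

lemma tau_pos (hτ0 : τ 0 = 1) (hτ_mem : ∀ k, τ (k + 1) ∈ Ioo (0 : ℝ) 1) (k : ℕ) :
    0 < τ k := by
  cases k with
  | zero => rw [hτ0]; exact one_pos
  | succ k => exact (hτ_mem k).1

lemma beta_pos (hβ0 : 0 < β 0) (hτ_mem : ∀ k, τ (k + 1) ∈ Ioo (0 : ℝ) 1)
    (hβ : ∀ k, β (k + 1) = β k / (1 + τ (k + 1))) (k : ℕ) : 0 < β k := by
  induction k with
  | zero => exact hβ0
  | succ k ih => rw [hβ k]; exact div_pos ih (by linarith [(hτ_mem k).1])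

/-- If `τ_{k+1} < 1/(k+2)`, compare both sides of `τ_{k+1}² (1 + τ_{k+1}) = τ_k² (1 - τ_{k+1})`
with their values at `1/(k+2)` (using `τ_k ≥ 1/(k+1)`): this gives `(k+2)² < (k+1)(k+3)`. -/
lemma one_le_tau_mul (hτ0 : τ 0 = 1) (hτ_mem : ∀ k, τ (k + 1) ∈ Ioo (0 : ℝ) 1)
    (hτ_eq : ∀ k, τ (k + 1) ^ 3 + τ (k + 1) ^ 2 + τ k ^ 2 * τ (k + 1) - τ k ^ 2 = 0)
    (k : ℕ) : 1 ≤ τ k * (k + 1) := by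
  induction k with
  | zero => simp [hτ0]
  | succ k ih =>
    have ht0 := (hτ_mem k).1
    set t := τ (k + 1)
    set s := τ k
    set a : ℝ := k + 2
    have ha : 2 ≤ a := by simp [a]
    have hs : 1 ≤ s * (a - 1) := by convert ih using 2; ring
    push_cast
    by_contra! hta
    have hta : t * a < 1 := by simpa [a, add_assoc, one_add_one_eq_two] using hta
    have hcubic : t ^ 2 * (1 + t) = s ^ 2 * (1 - t) := by linear_combination hτ_eq k
    have hupper : t ^ 2 * (1 + t) * a ^ 3 < a + 1 := by
      have : (t * a) ^ 2 < 1 := pow_lt_one₀ (by positivity) hta two_ne_zero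
      nlinarith
    have hlower : a - 1 < s ^ 2 * (1 - t) * ((a - 1) ^ 2 * a) := by
      have : 1 ≤ (s * (a - 1)) ^ 2 := one_le_pow₀ hs
      nlinarith
    rw [← hcubic] at hlower
    nlinarith

lemma beta_mul_le (hτ0 : τ 0 = 1) (hτ_mem : ∀ k, τ (k + 1) ∈ Ioo (0 : ℝ) 1)
    (hτ_eq : ∀ k, τ (k + 1) ^ 3 + τ (k + 1) ^ 2 + τ k ^ 2 * τ (k + 1) - τ k ^ 2 = 0)
    (hβ0 : 0 < β 0) (hβ : ∀ k, β (k + 1) = β k / (1 + τ (k + 1))) (k : ℕ) :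
    β k * (k + 2) ≤ 2 * β 0 := by
  induction k with
  | zero => norm_num [mul_comm]
  | succ k ih =>
    have ht : 1 ≤ τ (k + 1) * (k + 2) := by
      have := one_le_tau_mul hτ0 hτ_mem hτ_eq (k + 1); push_cast at this; linarith
    have hβt : β k ≤ 2 * β 0 * τ (k + 1) :=
      le_of_mul_le_mul_right (by nlinarith) (by positivity : (0 : ℝ) < k + 2)
    rw [hβ k, div_mul_eq_mul_div, div_le_iff₀ (by linarith [(hτ_mem k).1])]
    push_cast
    nlinarith

lemma beta_zero_mul_tau_sq_le (hτ0 : τ 0 = 1) (hτ_mem : ∀ k, τ (k + 1) ∈ Ioo (0 : ℝ) 1)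
    (hτ_eq : ∀ k, τ (k + 1) ^ 3 + τ (k + 1) ^ 2 + τ k ^ 2 * τ (k + 1) - τ k ^ 2 = 0)
    (hβ0 : 0 < β 0) (hβ : ∀ k, β (k + 1) = β k / (1 + τ (k + 1))) (k : ℕ) :
    β 0 * (k + 1) * τ k ^ 2 ≤ β k := by
  induction k with
  | zero => simp [hτ0]
  | succ k ih =>
    have ht : 1 ≤ τ (k + 1) * (k + 2) := by
      have := one_le_tau_mul hτ0 hτ_mem hτ_eq (k + 1); push_cast at this; linarith
    have hcubic : τ (k + 1) ^ 2 * (1 + τ (k + 1)) = τ k ^ 2 * (1 - τ (k + 1)) := by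
      linear_combination hτ_eq k
    rw [hβ k, le_div_iff₀ (by linarith [(hτ_mem k).1])]
    calc β 0 * ((k + 1 : ℕ) + 1) * τ (k + 1) ^ 2 * (1 + τ (k + 1))
        = β 0 * τ k ^ 2 * ((k + 2) * (1 - τ (k + 1))) := by
          rw [mul_assoc _ (τ (k + 1) ^ 2), hcubic]; push_cast; ring
      _ ≤ β 0 * τ k ^ 2 * (k + 1) := by gcongr; linarith
      _ ≤ β k := by linarith

lemma beta_div_two_le (hτ0 : τ 0 = 1) (hτ_mem : ∀ k, τ (k + 1) ∈ Ioo (0 : ℝ) 1)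
    (hτ_eq : ∀ k, τ (k + 1) ^ 3 + τ (k + 1) ^ 2 + τ k ^ 2 * τ (k + 1) - τ k ^ 2 = 0)
    (hβ0 : 0 < β 0) (hβ : ∀ k, β (k + 1) = β k / (1 + τ (k + 1))) (k : ℕ) :
    β k / 2 ≤ β 0 / (k + 1 + 1) := by
  rw [div_le_div_iff₀ two_pos (by positivity)]
  linarith [beta_mul_le hτ0 hτ_mem hτ_eq hβ0 hβ k]

lemma tau_sq_mul_div_beta_le (hτ0 : τ 0 = 1) (hτ_mem : ∀ k, τ (k + 1) ∈ Ioo (0 : ℝ) 1)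
    (hτ_eq : ∀ k, τ (k + 1) ^ 3 + τ (k + 1) ^ 2 + τ k ^ 2 * τ (k + 1) - τ k ^ 2 = 0)
    (hβ0 : 0 < β 0) (hβ : ∀ k, β (k + 1) = β k / (1 + τ (k + 1))) {c : ℝ} (hc : 0 ≤ c)
    (k : ℕ) : τ k ^ 2 * (c / β k) / 2 ≤ c / (2 * β 0 * (k + 1)) := by
  have hβk := beta_pos hβ0 hτ_mem hβ k
  rw [mul_div_assoc', div_div, div_le_div_iff₀ (by positivity) (by positivity)]
  nlinarith [beta_zero_mul_tau_sq_le hτ0 hτ_mem hτ_eq hβ0 hβ k]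

end Parameters

section Iteration

variable {E F : Type*} [NormedAddCommGroup E] [InnerProductSpace ℝ E]
  [NormedAddCommGroup F] [InnerProductSpace ℝ F]
  {f : E → ℝ} {Sf : Set E} {gstar : F → ℝ} {Sg : Set F} {K : E →L[ℝ] F} {ydot : F}

theorem step_le [CompleteSpace E] [CompleteSpace F] (hSf : Convex ℝ Sf)
    (hf : ConvexOn ℝ Sf f) (hSg : Convex ℝ Sg) (hgstar : ConvexOn ℝ Sg gstar)
    {xs : E} (hxs : xs ∈ Sf) {Fs : ℝ} (hFs : ∀ y ∈ Sg, f xs + ⟪K xs, y⟫ - gstar y ≤ Fs)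
    {τ β L : ℝ} (hτ0 : 0 ≤ τ) (hτ1 : τ ≤ 1) (hβ : 0 < β) (hL : L = ‖K‖ ^ 2 / β)
    {x xhat xnext : E} {y : F} (hx : x ∈ Sf) (hy : y ∈ Sg)
    (hymax : IsMaxOn (fun z => ⟪K xhat, z⟫ - gstar z - β / 2 * ‖z - ydot‖ ^ 2) Sg y)
    (hxnext : xnext ∈ Sf)
    (hxmin : IsMinOn (fun z => f z + ⟪(ContinuousLinearMap.adjoint K) y, z⟫ +
      L / 2 * ‖z - xhat‖ ^ 2) Sf xnext) :
    f xnext + nesterovSmoothing gstar Sg ydot β (K xnext) - Fs ≤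
      (1 - τ) * (f x + ⟪K x, y⟫ - gstar y - Fs) - β / 2 * ‖y - ydot‖ ^ 2
      + L / 2 * (‖(1 - τ) • x + τ • xs - xhat‖ ^ 2 - ‖(1 - τ) • x + τ • xs - xnext‖ ^ 2) := by
  set xc := (1 - τ) • x + τ • xs
  have hsmooth : nesterovSmoothing gstar Sg ydot β (K xnext) ≤ ⟪y, K xnext⟫ - gstar y
      - β / 2 * ‖y - ydot‖ ^ 2 + L / 2 * ‖xnext - xhat‖ ^ 2 := by
    have h := nesterovSmoothing_le_of_isMaxOn hSg hgstar hβ hy hymax (K xnext)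
    have hK : ‖K xnext - K xhat‖ ^ 2 ≤ ‖K‖ ^ 2 * ‖xnext - xhat‖ ^ 2 := by
      rw [← map_sub, ← mul_pow]
      exact pow_le_pow_left₀ (norm_nonneg _) (K.le_opNorm _) 2
    have hKL : 1 / (2 * β) * ‖K xnext - K xhat‖ ^ 2 ≤ L / 2 * ‖xnext - xhat‖ ^ 2 := by
      calc 1 / (2 * β) * ‖K xnext - K xhat‖ ^ 2
          ≤ 1 / (2 * β) * (‖K‖ ^ 2 * ‖xnext - xhat‖ ^ 2) := by gcongr
        _ = L / 2 * ‖xnext - xhat‖ ^ 2 := by rw [hL]; ring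
    rw [inner_sub_right, real_inner_comm (K xhat)] at h
    linarith
  have hxc : xc ∈ Sf := hSf hx hxs (by linarith) hτ0 (by ring)
  have hprox := (hf.add ((innerSL ℝ ((ContinuousLinearMap.adjoint K) y)).toLinearMap.convexOn
    hSf)).three_point_of_isMinOn hxnext hxmin hxc
  simp only [Pi.add_apply, ContinuousLinearMap.coe_coe, innerSL_apply_apply,
    ContinuousLinearMap.adjoint_inner_left] at hprox
  have hfc : f xc ≤ (1 - τ) * f x + τ * f xs := hf.2 hx hxs (by linarith) hτ0 (by ring)
  have hKc : ⟪y, K xc⟫ = (1 - τ) * ⟪y, K x⟫ + τ * ⟪y, K xs⟫ := by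
    simp only [xc, map_add, map_smul, inner_add_right, real_inner_smul_right]
  have hsaddle := hFs y hy
  rw [real_inner_comm] at hsaddle
  rw [real_inner_comm]
  linarith [mul_le_mul_of_nonneg_left hsaddle hτ0]

/-- The sequence `x̃ᵏ` with `x̂ᵏ = (1 - τ_k) xᵏ + τ_k x̃ᵏ`. -/
noncomputable def momentumSeq (τ : ℕ → ℝ) (x xhat : ℕ → E) (k : ℕ) : E :=
  x k + (τ k)⁻¹ • (xhat k - x k)

variable {τ β L η : ℕ → ℝ} {x xhat : ℕ → E} {y : ℕ → F}

lemma momentumSeq_zero (hτ0 : τ 0 = 1) (hxhat0 : xhat 0 = x 0) :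
    momentumSeq τ x xhat 0 = x 0 := by
  simp [momentumSeq, hτ0, hxhat0]

/-- For `K ≠ 0` the choice of `η` gives `τ_k x̃ᵏ⁺¹ = xᵏ⁺¹ - (1 - τ_k) xᵏ`; for `K = 0` the
ratio `L_{k+1}/L_k` in `η` is `0/0`, but then both sides vanish. -/
lemma quad_eq_momentumSeq (hτ0 : τ 0 = 1) (hτ_mem : ∀ k, τ (k + 1) ∈ Ioo (0 : ℝ) 1)
    (hτ_eq : ∀ k, τ (k + 1) ^ 3 + τ (k + 1) ^ 2 + τ k ^ 2 * τ (k + 1) - τ k ^ 2 = 0)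
    (hβ0 : 0 < β 0) (hβ : ∀ k, β (k + 1) = β k / (1 + τ (k + 1)))
    (hL : ∀ k, L k = ‖K‖ ^ 2 / β k)
    (hη : ∀ k, η (k + 1) = (1 - τ k) * τ k / (τ k ^ 2 + L (k + 1) / L k * τ (k + 1)))
    (hxhat : ∀ k, xhat (k + 1) = x (k + 1) + η (k + 1) • (x (k + 1) - x k)) (xs : E) (k : ℕ) :
    L k / 2 * (‖(1 - τ k) • x k + τ k • xs - xhat k‖ ^ 2
      - ‖(1 - τ k) • x k + τ k • xs - x (k + 1)‖ ^ 2)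
      = τ k ^ 2 * L k / 2 * (‖xs - momentumSeq τ x xhat k‖ ^ 2
        - ‖xs - momentumSeq τ x xhat (k + 1)‖ ^ 2) := by
  by_cases hK : ‖K‖ = 0
  · simp [hL, hK]
  have hτk := (tau_pos hτ0 hτ_mem k).ne'
  have hτk1 := (hτ_mem k).1.ne'
  have hβk := (beta_pos hβ0 hτ_mem hβ k).ne'
  have h1t : 1 + τ (k + 1) ≠ 0 := by linarith [(hτ_mem k).1]
  have hratio : L (k + 1) / L k = 1 + τ (k + 1) := by
    rw [hL, hL, hβ k]; field_simp
  have hcoef : τ k * (τ (k + 1))⁻¹ * η (k + 1) = 1 - τ k := by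
    have : τ k ^ 2 + τ (k + 1) * (1 + τ (k + 1)) ≠ 0 := by
      have := (hτ_mem k).1; positivity
    rw [hη k, hratio]
    field_simp
    linear_combination (τ k - 1) * hτ_eq k
  have e0 : (1 - τ k) • x k + τ k • xs - xhat k = τ k • (xs - momentumSeq τ x xhat k) := by
    simp only [momentumSeq, smul_sub, smul_add, smul_inv_smul₀ hτk]; module
  have e1 : (1 - τ k) • x k + τ k • xs - x (k + 1)
      = τ k • (xs - momentumSeq τ x xhat (k + 1)) := by
    simp only [momentumSeq, hxhat k, add_sub_cancel_left]
    linear_combination (norm := module) hcoef • (x (k + 1) - x k)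
  rw [e0, e1, norm_smul, norm_smul, mul_pow, mul_pow, Real.norm_eq_abs, sq_abs]
  ring

lemma weight_succ (hτ_mem : ∀ k, τ (k + 1) ∈ Ioo (0 : ℝ) 1)
    (hτ_eq : ∀ k, τ (k + 1) ^ 3 + τ (k + 1) ^ 2 + τ k ^ 2 * τ (k + 1) - τ k ^ 2 = 0)
    (hβ0 : 0 < β 0) (hβ : ∀ k, β (k + 1) = β k / (1 + τ (k + 1)))
    (hL : ∀ k, L k = ‖K‖ ^ 2 / β k) (k : ℕ) :
    (1 - τ (k + 1)) * (τ k ^ 2 * L k / 2) = τ (k + 1) ^ 2 * L (k + 1) / 2 := by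
  have hβk := (beta_pos hβ0 hτ_mem hβ k).ne'
  have h1t : 1 + τ (k + 1) ≠ 0 := by linarith [(hτ_mem k).1]
  rw [hL, hL, hβ k]
  field_simp
  linear_combination (-‖K‖ ^ 2) * hτ_eq k

lemma smoothedGap_succ_le [CompleteSpace E] [CompleteSpace F] (hSf : Convex ℝ Sf)
    (hf : ConvexOn ℝ Sf f) (hSg : Convex ℝ Sg) (hgstar : ConvexOn ℝ Sg gstar) {g : F → ℝ}
    (hFY : ∀ z ∈ Sg, ∀ u, ⟪z, u⟫ - g u ≤ gstar z) {xs : E} (hxs : xs ∈ Sf) {Fs : ℝ}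
    (hFs : ∀ y ∈ Sg, f xs + ⟪K xs, y⟫ - gstar y ≤ Fs)
    (hτ_mem : ∀ k, τ (k + 1) ∈ Ioo (0 : ℝ) 1)
    (hβ0 : 0 < β 0) (hβ : ∀ k, β (k + 1) = β k / (1 + τ (k + 1)))
    (hL : ∀ k, L k = ‖K‖ ^ 2 / β k)
    (hyup : ∀ k, y (k + 1) ∈ Sg ∧
      IsMaxOn (fun z => ⟪K (xhat k), z⟫ - gstar z - β k / 2 * ‖z - ydot‖ ^ 2) Sg (y (k + 1)))
    (hxup : ∀ k, x (k + 1) ∈ Sf ∧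
      IsMinOn (fun z => f z + ⟪(ContinuousLinearMap.adjoint K) (y (k + 1)), z⟫ +
        L k / 2 * ‖z - xhat k‖ ^ 2) Sf (x (k + 1))) (k : ℕ) :
    f (x (k + 2)) + nesterovSmoothing gstar Sg ydot (β (k + 1)) (K (x (k + 2))) - Fs ≤
      (1 - τ (k + 1))
        * (f (x (k + 1)) + nesterovSmoothing gstar Sg ydot (β k) (K (x (k + 1))) - Fs)
      + L (k + 1) / 2 * (‖(1 - τ (k + 1)) • x (k + 1) + τ (k + 1) • xs - xhat (k + 1)‖ ^ 2
        - ‖(1 - τ (k + 1)) • x (k + 1) + τ (k + 1) • xs - x (k + 2)‖ ^ 2) := by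
  obtain ⟨ht0, ht1⟩ := hτ_mem k
  have hβk1 := beta_pos hβ0 hτ_mem hβ (k + 1)
  have hstep := step_le (xnext := x (k + 2)) (y := y (k + 2)) hSf hf hSg hgstar hxs hFs
    ht0.le ht1.le hβk1 (hL (k + 1)) (hxup k).1 (hyup (k + 1)).1 (hyup (k + 1)).2
    (hxup (k + 1)).1 (hxup (k + 1)).2
  -- as `β_k = (1 + τ_{k+1}) β_{k+1}`, the penalty `-β_{k+1}/2 ‖y - ẏ‖²` of the step absorbs
  -- the change of smoothing parameter
  have hsmooth := le_nesterovSmoothing (ydot := ydot) hFY (beta_pos hβ0 hτ_mem hβ k).le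
    (K (x (k + 1))) (z := y (k + 2)) (hyup (k + 1)).1
  have hpenalty : β k / 2 * ‖y (k + 2) - ydot‖ ^ 2
      = (1 + τ (k + 1)) * β (k + 1) / 2 * ‖y (k + 2) - ydot‖ ^ 2 := by
    rw [hβ k, mul_div_cancel₀ _ (by linarith)]
  rw [hpenalty] at hsmooth
  have hdrop : (1 - τ (k + 1)) * ((1 + τ (k + 1)) * β (k + 1) / 2 * ‖y (k + 2) - ydot‖ ^ 2)
      ≤ β (k + 1) / 2 * ‖y (k + 2) - ydot‖ ^ 2 := by
    have : 0 ≤ τ (k + 1) ^ 2 * β (k + 1) * ‖y (k + 2) - ydot‖ ^ 2 := by positivity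
    linarith
  linarith [mul_le_mul_of_nonneg_left hsmooth (by linarith : (0 : ℝ) ≤ 1 - τ (k + 1))]

lemma smoothedGap_le [CompleteSpace E] [CompleteSpace F] (hSf : Convex ℝ Sf)
    (hf : ConvexOn ℝ Sf f) (hSg : Convex ℝ Sg) (hgstar : ConvexOn ℝ Sg gstar) {g : F → ℝ}
    (hFY : ∀ z ∈ Sg, ∀ u, ⟪z, u⟫ - g u ≤ gstar z) {xs : E} (hxs : xs ∈ Sf) {Fs : ℝ}
    (hFs : ∀ y ∈ Sg, f xs + ⟪K xs, y⟫ - gstar y ≤ Fs)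
    (hτ0 : τ 0 = 1) (hτ_mem : ∀ k, τ (k + 1) ∈ Ioo (0 : ℝ) 1)
    (hτ_eq : ∀ k, τ (k + 1) ^ 3 + τ (k + 1) ^ 2 + τ k ^ 2 * τ (k + 1) - τ k ^ 2 = 0)
    (hβ0 : 0 < β 0) (hβ : ∀ k, β (k + 1) = β k / (1 + τ (k + 1)))
    (hL : ∀ k, L k = ‖K‖ ^ 2 / β k)
    (hη : ∀ k, η (k + 1) = (1 - τ k) * τ k / (τ k ^ 2 + L (k + 1) / L k * τ (k + 1)))
    (hx0 : x 0 ∈ Sf) (hxhat0 : xhat 0 = x 0)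
    (hyup : ∀ k, y (k + 1) ∈ Sg ∧
      IsMaxOn (fun z => ⟪K (xhat k), z⟫ - gstar z - β k / 2 * ‖z - ydot‖ ^ 2) Sg (y (k + 1)))
    (hxup : ∀ k, x (k + 1) ∈ Sf ∧
      IsMinOn (fun z => f z + ⟪(ContinuousLinearMap.adjoint K) (y (k + 1)), z⟫ +
        L k / 2 * ‖z - xhat k‖ ^ 2) Sf (x (k + 1)))
    (hxhat : ∀ k, xhat (k + 1) = x (k + 1) + η (k + 1) • (x (k + 1) - x k)) (k : ℕ) :
    f (x (k + 1)) + nesterovSmoothing gstar Sg ydot (β k) (K (x (k + 1))) - Fs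
      ≤ τ k ^ 2 * L k / 2 * ‖x 0 - xs‖ ^ 2 := by
  have hquad := quad_eq_momentumSeq hτ0 hτ_mem hτ_eq hβ0 hβ hL hη hxhat xs
  have hbase : f (x 1) + nesterovSmoothing gstar Sg ydot (β 0) (K (x 1)) - Fs
      ≤ τ 0 ^ 2 * L 0 / 2
        * (‖xs - momentumSeq τ x xhat 0‖ ^ 2 - ‖xs - momentumSeq τ x xhat 1‖ ^ 2) := by
    have h := step_le hSf hf hSg hgstar hxs hFs (by rw [hτ0]; exact zero_le_one) hτ0.le hβ0
      (hL 0) hx0 (hyup 0).1 (hyup 0).2 (hxup 0).1 (hxup 0).2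
    rw [hquad 0] at h
    have : 0 ≤ β 0 / 2 * ‖y 1 - ydot‖ ^ 2 := by positivity
    simp only [hτ0, sub_self, zero_mul] at h ⊢
    linarith
  have hrec := smoothedGap_succ_le hSf hf hSg hgstar hFY hxs hFs hτ_mem hβ0 hβ hL hyup hxup
  simp only [hquad] at hrec
  have hgap := le_mul_sub_of_recursion
    (a := fun k => f (x (k + 1)) + nesterovSmoothing gstar Sg ydot (β k) (K (x (k + 1))) - Fs)
    (w := fun k => τ k ^ 2 * L k / 2) (d := fun k => ‖xs - momentumSeq τ x xhat k‖ ^ 2)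
    (θ := fun k => 1 - τ k) hbase hrec (fun k => by linarith [(hτ_mem k).2])
    (weight_succ hτ_mem hτ_eq hβ0 hβ hL) k
  rw [momentumSeq_zero hτ0 hxhat0, norm_sub_rev] at hgap
  have hw : 0 ≤ τ k ^ 2 * L k / 2 := by
    have := beta_pos hβ0 hτ_mem hβ k; rw [hL]; positivity
  linarith [mul_nonneg hw (sq_nonneg ‖xs - momentumSeq τ x xhat (k + 1)‖)]

end Iteration

end Asgard

theorem stmt5_general {p n : ℕ}
    (f : EuclideanSpace ℝ (Fin p) → ℝ) (Sf : Set (EuclideanSpace ℝ (Fin p)))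
    (g : EuclideanSpace ℝ (Fin n) → ℝ)
    (gstar : EuclideanSpace ℝ (Fin n) → ℝ) (Sg : Set (EuclideanSpace ℝ (Fin n)))
    (K : EuclideanSpace ℝ (Fin p) →L[ℝ] EuclideanSpace ℝ (Fin n))
    (hSf : Convex ℝ Sf) (hSg : Convex ℝ Sg)
    (hf : ConvexOn ℝ Sf f) (hg : ConvexOn ℝ univ g) (hgstar : ConvexOn ℝ Sg gstar)
    -- `g*` is the Fenchel conjugate of `g` (on its domain `Sg`)
    (hconj : ∀ y ∈ Sg, IsLUB {r : ℝ | ∃ u, r = ⟪y, u⟫ - g u} (gstar y))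
    -- every subgradient of `g` belongs to `dom g* = Sg`
    (hsub : ∀ u v : EuclideanSpace ℝ (Fin n),
      (∀ w, g u + ⟪v, w - u⟫ ≤ g w) → v ∈ Sg)
    -- `g` is `M_g`-Lipschitz continuous
    (Mg : ℝ) (hMg : 0 ≤ Mg)
    (hgLip : ∀ u v : EuclideanSpace ℝ (Fin n), |g u - g v| ≤ Mg * ‖u - v‖)
    -- a saddle point of the Lagrangian exists
    (xs : EuclideanSpace ℝ (Fin p)) (ys : EuclideanSpace ℝ (Fin n))
    (hxs : xs ∈ Sf)
    (hsaddle : ∀ x ∈ Sf, ∀ y ∈ Sg,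
      f xs + ⟪K xs, y⟫ - gstar y ≤ f xs + ⟪K xs, ys⟫ - gstar ys ∧
      f xs + ⟪K xs, ys⟫ - gstar ys ≤ f x + ⟪K x, ys⟫ - gstar ys)
    -- parameters of ASGARD+
    (τ β L η : ℕ → ℝ)
    (hτ0 : τ 0 = 1)
    (hτ : ∀ k, τ (k + 1) ∈ Ioo (0 : ℝ) 1 ∧
      (τ (k + 1)) ^ 3 + (τ (k + 1)) ^ 2 + (τ k) ^ 2 * τ (k + 1) - (τ k) ^ 2 = 0)
    (hβ0 : 0 < β 0)
    (hβ : ∀ k, β (k + 1) = β k / (1 + τ (k + 1)))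
    (hL : ∀ k, L k = ‖K‖ ^ 2 / β k)
    (hη : ∀ k, η (k + 1) = (1 - τ k) * τ k / ((τ k) ^ 2 + (L (k + 1) / L k) * τ (k + 1)))
    -- the iterates of ASGARD+
    (ydot : EuclideanSpace ℝ (Fin n))
    (x xhat : ℕ → EuclideanSpace ℝ (Fin p)) (yseq : ℕ → EuclideanSpace ℝ (Fin n))
    (hx0 : x 0 ∈ Sf) (hxhat0 : xhat 0 = x 0)
    (hyup : ∀ k, yseq (k + 1) ∈ Sg ∧
      IsMaxOn (fun z => ⟪K (xhat k), z⟫ - gstar z - β k / 2 * ‖z - ydot‖ ^ 2) Sg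
        (yseq (k + 1)))
    (hxup : ∀ k, x (k + 1) ∈ Sf ∧
      IsMinOn (fun z => f z + ⟪(ContinuousLinearMap.adjoint K) (yseq (k + 1)), z⟫ +
        L k / 2 * ‖z - xhat k‖ ^ 2) Sf (x (k + 1)))
    (hxhat : ∀ k, xhat (k + 1) = x (k + 1) + η (k + 1) • (x (k + 1) - x k)) :
    ∀ k : ℕ, 1 ≤ k →
      (f (x k) + g (K (x k))) - (f xs + ⟪K xs, ys⟫ - gstar ys) ≤
        ‖K‖ ^ 2 / (2 * β 0 * (k : ℝ)) * ‖x 0 - xs‖ ^ 2 +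
        β 0 / ((k : ℝ) + 1) * (‖ydot‖ + Mg) ^ 2 := by
  have hτ_mem := fun k => (hτ k).1
  have hτ_eq := fun k => (hτ k).2
  have hFY : ∀ z ∈ Sg, ∀ u, ⟪z, u⟫ - g u ≤ gstar z := fun z hz u => (hconj z hz).1 ⟨u, rfl⟩
  intro k hk
  obtain ⟨j, rfl⟩ := Nat.exists_eq_add_of_le' hk
  have hsmooth := le_nesterovSmoothing_add (ydot := ydot) hg hMg hgLip hconj hsub
    (Asgard.beta_pos hβ0 hτ_mem hβ j).le (K (x (j + 1)))
  have hgap := Asgard.smoothedGap_le hSf hf hSg hgstar hFY hxs (fun y hy => (hsaddle xs hxs y hy).1)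
    hτ0 hτ_mem hτ_eq hβ0 hβ hL hη hx0 hxhat0 hyup hxup hxhat j
  have hweight := Asgard.tau_sq_mul_div_beta_le hτ0 hτ_mem hτ_eq hβ0 hβ (sq_nonneg ‖K‖) j
  have hbeta := Asgard.beta_div_two_le hτ0 hτ_mem hτ_eq hβ0 hβ j
  rw [← hL] at hweight
  push_cast
  calc _ ≤ τ j ^ 2 * L j / 2 * ‖x 0 - xs‖ ^ 2 + β j / 2 * (‖ydot‖ + Mg) ^ 2 := by linarith
    _ ≤ _ := by gcongr ?_ * _ + ?_ * _

/-- Theorem 1(b): primal objective residual bound of ASGARD+ in the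
general convex case `μ_f = μ_{g*} = 0`, with `g` being `M_g`-Lipschitz continuous.
For all `k ≥ 1`, `F(x^k) - F⋆ ≤ (‖K‖²/(2β₀k))‖x⁰-x⋆‖² + (β₀/(k+1))(‖ẏ‖+M_g)²`. -/
theorem stmt5 {p n : ℕ}
    (f : EuclideanSpace ℝ (Fin p) → ℝ) (Sf : Set (EuclideanSpace ℝ (Fin p)))
    (g : EuclideanSpace ℝ (Fin n) → ℝ)
    (gstar : EuclideanSpace ℝ (Fin n) → ℝ) (Sg : Set (EuclideanSpace ℝ (Fin n)))
    (K : EuclideanSpace ℝ (Fin p) →L[ℝ] EuclideanSpace ℝ (Fin n))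
    (hSf : Convex ℝ Sf) (hSg : Convex ℝ Sg)
    (hSfc : IsClosed Sf) (hSgc : IsClosed Sg)
    (hf : ConvexOn ℝ Sf f) (hg : ConvexOn ℝ univ g) (hgstar : ConvexOn ℝ Sg gstar)
    -- `g*` is the Fenchel conjugate of `g` (on its domain `Sg`)
    (hconj : ∀ y ∈ Sg, IsLUB {r : ℝ | ∃ u, r = ⟪y, u⟫ - g u} (gstar y))
    -- every subgradient of `g` belongs to `dom g* = Sg`
    (hsub : ∀ u v : EuclideanSpace ℝ (Fin n),
      (∀ w, g u + ⟪v, w - u⟫ ≤ g w) → v ∈ Sg)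
    -- `g` is `M_g`-Lipschitz continuous
    (Mg : ℝ) (hMg : 0 ≤ Mg)
    (hgLip : ∀ u v : EuclideanSpace ℝ (Fin n), |g u - g v| ≤ Mg * ‖u - v‖)
    -- a saddle point of the Lagrangian exists
    (xs : EuclideanSpace ℝ (Fin p)) (ys : EuclideanSpace ℝ (Fin n))
    (hxs : xs ∈ Sf) (hys : ys ∈ Sg)
    (hsaddle : ∀ x ∈ Sf, ∀ y ∈ Sg,
      f xs + ⟪K xs, y⟫ - gstar y ≤ f xs + ⟪K xs, ys⟫ - gstar ys ∧
      f xs + ⟪K xs, ys⟫ - gstar ys ≤ f x + ⟪K x, ys⟫ - gstar ys)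
    -- parameters of ASGARD+
    (τ β L η : ℕ → ℝ)
    (hτ0 : τ 0 = 1)
    (hτ : ∀ k, τ (k + 1) ∈ Ioo (0 : ℝ) 1 ∧
      (τ (k + 1)) ^ 3 + (τ (k + 1)) ^ 2 + (τ k) ^ 2 * τ (k + 1) - (τ k) ^ 2 = 0)
    (hβ0 : 0 < β 0)
    (hβ : ∀ k, β (k + 1) = β k / (1 + τ (k + 1)))
    (hL : ∀ k, L k = ‖K‖ ^ 2 / β k)
    (hη : ∀ k, η (k + 1) = (1 - τ k) * τ k / ((τ k) ^ 2 + (L (k + 1) / L k) * τ (k + 1)))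
    -- the iterates of ASGARD+
    (ydot : EuclideanSpace ℝ (Fin n))
    (x xhat : ℕ → EuclideanSpace ℝ (Fin p)) (yseq ytil : ℕ → EuclideanSpace ℝ (Fin n))
    (hx0 : x 0 ∈ Sf) (hxhat0 : xhat 0 = x 0) (hytil0 : ytil 0 ∈ Sg)
    (hyup : ∀ k, yseq (k + 1) ∈ Sg ∧
      IsMaxOn (fun z => ⟪K (xhat k), z⟫ - gstar z - β k / 2 * ‖z - ydot‖ ^ 2) Sg
        (yseq (k + 1)))
    (hxup : ∀ k, x (k + 1) ∈ Sf ∧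
      IsMinOn (fun z => f z + ⟪(ContinuousLinearMap.adjoint K) (yseq (k + 1)), z⟫ +
        L k / 2 * ‖z - xhat k‖ ^ 2) Sf (x (k + 1)))
    (hxhat : ∀ k, xhat (k + 1) = x (k + 1) + η (k + 1) • (x (k + 1) - x k))
    (hytil : ∀ k, ytil (k + 1) = (1 - τ k) • ytil k + τ k • yseq (k + 1)) :
    ∀ k : ℕ, 1 ≤ k →
      (f (x k) + g (K (x k))) - (f xs + ⟪K xs, ys⟫ - gstar ys) ≤
        ‖K‖ ^ 2 / (2 * β 0 * (k : ℝ)) * ‖x 0 - xs‖ ^ 2 +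
        β 0 / ((k : ℝ) + 1) * (‖ydot‖ + Mg) ^ 2 :=
  stmt5_general f Sf g gstar Sg K hSf hSg hf hg hgstar hconj hsub Mg hMg hgLip xs ys hxs hsaddle τ β
    L η hτ0 hτ hβ0 hβ hL hη ydot x xhat yseq hx0 hxhat0 hyup hxup hxhat
end
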